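/- arXiv:1005.1370 — 4 statements merged into one kernel-verified Lean document; each statement's English description precedes it below -/
import Mathlib

section
/- The infinite cross graph (four copies of N glued at a common origin, i.e., the subgraph of Z^2 on points with at least one coordinate zero) admits no harmonic labeling. -/
/-- The vertex set of the infinite cross graph: points of `ℤ²` with at
least one coordinate zero. -/
def CrossVertex : Type := {p : ℤ × ℤ // p.1 = 0 ∨ p.2 = 0}

/-- The horizontal arm of the cross: the point `(x, 0)`. -/
def crossH (x : ℤ) : CrossVertex := ⟨(x, 0), Or.inr rfl⟩

/-- The vertical arm of the cross: the point `(0, y)`. -/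
def crossV (y : ℤ) : CrossVertex := ⟨(0, y), Or.inl rfl⟩

/-- `φ : CrossVertex → ℤ` is harmonic: at the origin (degree 4) and at every
other vertex (degree 2), `deg(v)·φ(v)` equals the sum of `φ` over the
neighbors of `v`. -/
def CrossHarmonic (φ : CrossVertex → ℤ) : Prop :=
  (∀ x : ℤ, x ≠ 0 → 2 * φ (crossH x) = φ (crossH (x + 1)) + φ (crossH (x - 1))) ∧
  (∀ y : ℤ, y ≠ 0 → 2 * φ (crossV y) = φ (crossV (y + 1)) + φ (crossV (y - 1))) ∧
  4 * φ (crossH 0) = φ (crossH 1) + φ (crossH (-1)) + φ (crossV 1) + φ (crossV (-1))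

/-- A sequence satisfying the discrete Laplace equation on `x ≥ 1` is linear on `x ≥ 0`. -/
lemma lin_pos (f : ℤ → ℤ) (h : ∀ x : ℤ, 1 ≤ x → 2 * f x = f (x + 1) + f (x - 1)) :
    ∀ x : ℤ, 0 ≤ x → f x = f 0 + x * (f 1 - f 0) := by
  have hd : ∀ x : ℤ, 0 ≤ x → f (x + 1) - f x = f 1 - f 0 := by
    refine Int.le_induction ?_ ?_
    · norm_num
    · intro k hk ih
      have h2 := h (k + 1) (by omega)
      have e1 : k + 1 - 1 = k := by ring
      have e2 : k + 1 + 1 = k + 2 := by ring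
      rw [e1] at h2
      rw [e2] at h2 ⊢
      omega
  refine Int.le_induction ?_ ?_
  · ring
  · intro k hk ih
    have h1 := hd k hk
    have h2 : f (k + 1) = f k + (f 1 - f 0) := by omega
    rw [h2, ih]; ring

lemma pair_contra {φ : CrossVertex → ℤ} (hinj : Function.Injective φ)
    (w1 w2 : ℤ → CrossVertex) (c d e : ℤ)
    (H1 : ∀ x : ℤ, 0 ≤ x → φ (w1 x) = c + x * d)
    (H2 : ∀ x : ℤ, 0 ≤ x → φ (w2 x) = c + x * e)
    (hne : w1 |e| ≠ w2 |d|) (hsame : 0 < d * e) : False := by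
  have h1 := H1 |e| (abs_nonneg e)
  have h2 := H2 |d| (abs_nonneg d)
  have key : |e| * d = |d| * e := by
    rcases mul_pos_iff.mp hsame with ⟨hdp, hep⟩ | ⟨hdn, hen⟩
    · rw [abs_of_pos hep, abs_of_pos hdp]; ring
    · rw [abs_of_neg hen, abs_of_neg hdn]; ring
  exact hne (hinj (by rw [h1, h2, key]))

lemma crossH_fst (x : ℤ) : (crossH x).1.1 = x := rfl
lemma crossH_snd (x : ℤ) : (crossH x).1.2 = 0 := rfl
lemma crossV_fst (y : ℤ) : (crossV y).1.1 = 0 := rfl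
lemma crossV_snd (y : ℤ) : (crossV y).1.2 = y := rfl

/-- The infinite cross graph admits no harmonic labeling. -/
theorem no_harmonic_labeling_of_cross :
    ¬ ∃ φ : CrossVertex → ℤ, CrossHarmonic φ ∧ Function.Bijective φ := by
  rintro ⟨φ, ⟨hH, hV, h0⟩, hinj, hsurj⟩
  have hV0 : crossV 0 = crossH 0 := Subtype.ext rfl
  set c := φ (crossH 0) with hc
  -- the three arm functions are linear
  have A1 : ∀ x : ℤ, 0 ≤ x → φ (crossH x) = c + x * (φ (crossH 1) - c) := by
    have := lin_pos (fun x => φ (crossH x)) (fun x hx => hH x (by omega))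
    simpa using this
  have A2 : ∀ x : ℤ, 0 ≤ x → φ (crossH (-x)) = c + x * (φ (crossH (-1)) - c) := by
    have := lin_pos (fun x => φ (crossH (-x))) ?_
    · simpa using this
    · intro x hx
      have h2 := hH (-x) (by omega)
      have e1 : -x + 1 = -(x - 1) := by ring
      have e2 : -x - 1 = -(x + 1) := by ring
      rw [e1, e2] at h2
      linarith [h2]
  have A3 : ∀ x : ℤ, 0 ≤ x → φ (crossV x) = c + x * (φ (crossV 1) - c) := by
    have := lin_pos (fun x => φ (crossV x)) (fun x hx => hV x (by omega))
    intro x hx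
    have := this x hx
    rw [this, show φ (crossV 0) = c from congrArg φ hV0]
  set d1 := φ (crossH 1) - c with hd1def
  set d2 := φ (crossH (-1)) - c with hd2def
  set d3 := φ (crossV 1) - c with hd3def
  -- slopes are nonzero by injectivity
  have hd1 : d1 ≠ 0 := by
    intro h
    have e1 : φ (crossH 2) = φ (crossH 0) := by rw [A1 2 (by norm_num), h]; ring
    have := congrArg (fun v => v.1.1) (hinj e1)
    simp only [crossH_fst] at this
    omega
  have hd2 : d2 ≠ 0 := by
    intro h
    have e1 : φ (crossH (-2)) = φ (crossH 0) := by
      rw [show (-2 : ℤ) = -(2 : ℤ) by ring, A2 2 (by norm_num), h]; ring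
    have := congrArg (fun v => v.1.1) (hinj e1)
    simp only [crossH_fst] at this
    omega
  have hd3 : d3 ≠ 0 := by
    intro h
    have e1 : φ (crossV 2) = φ (crossV 0) := by
      rw [A3 2 (by norm_num), A3 0 (by norm_num), h]; ring
    have := congrArg (fun v => v.1.2) (hinj e1)
    simp only [crossV_snd] at this
    omega
  -- two of the three slopes share a sign
  have htwo : 0 < d1 * d2 ∨ 0 < d1 * d3 ∨ 0 < d2 * d3 := by
    rcases hd1.lt_or_gt with h1 | h1 <;> rcases hd2.lt_or_gt with h2 | h2 <;>
      rcases hd3.lt_or_gt with h3 | h3 <;>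
      first
      | exact Or.inl (mul_pos h1 h2)
      | exact Or.inl (mul_pos_of_neg_of_neg h1 h2)
      | exact Or.inr (Or.inl (mul_pos h1 h3))
      | exact Or.inr (Or.inl (mul_pos_of_neg_of_neg h1 h3))
      | exact Or.inr (Or.inr (mul_pos h2 h3))
      | exact Or.inr (Or.inr (mul_pos_of_neg_of_neg h2 h3))
  rcases htwo with hp | hp | hp
  · refine pair_contra hinj (fun x => crossH x) (fun x => crossH (-x)) c d1 d2 A1 A2 ?_ hp
    intro h
    have := congrArg (fun v => v.1.1) h
    simp only [crossH_fst] at this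
    have := abs_pos.mpr hd2
    have := abs_nonneg d1
    omega
  · refine pair_contra hinj (fun x => crossH x) (fun x => crossV x) c d1 d3 A1 A3 ?_ hp
    intro h
    have := congrArg (fun v => v.1.1) h
    simp only [crossH_fst, crossV_fst] at this
    have := abs_pos.mpr hd3
    omega
  · refine pair_contra hinj (fun x => crossH (-x)) (fun x => crossV x) c d2 d3 A2 A3 ?_ hp
    intro h
    have := congrArg (fun v => v.1.1) h
    simp only [crossH_fst, crossV_fst] at this
    have := abs_pos.mpr hd3
    omega
end

section
/- For every d ≥ 3, the d-regular infinite tree admits a harmonic labeling. -/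
set_option linter.unusedSectionVars false
set_option linter.unusedTactic false

open Finset SimpleGraph

namespace HLP

/-- Standard enumeration of the integers. -/
def enumZ (k : ℕ) : ℤ := if k % 2 = 0 then ((k / 2 : ℕ) : ℤ) else -(((k / 2 : ℕ) : ℤ) + 1)

lemma enumZ_injective : Function.Injective enumZ := by
  intro a b hab
  unfold enumZ at hab
  rcases Nat.mod_two_eq_zero_or_one a with ha | ha <;>
    rcases Nat.mod_two_eq_zero_or_one b with hb | hb <;>
    simp only [ha, hb] at hab <;> simp at hab <;> omega

lemma enumZ_surjective : Function.Surjective enumZ := by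
  intro z
  rcases le_or_gt 0 z with h | h
  · refine ⟨2 * z.toNat, ?_⟩
    simp [enumZ, Nat.mul_div_cancel_left]
    omega
  · refine ⟨2 * (-z - 1).toNat + 1, ?_⟩
    have h2 : (2 * (-z - 1).toNat + 1) % 2 = 1 := by omega
    simp [enumZ, h2]
    omega

/-- A sum that dominates every element of a finite set of integers. -/
def domF (F : Finset ℤ) : ℤ := ∑ z ∈ F, (|z| + 1)

lemma lt_domF {F : Finset ℤ} {z : ℤ} (hz : z ∈ F) : |z| < domF F := by
  have h1 : |z| + 1 ≤ domF F := by
    refine Finset.single_le_sum (f := fun z => |z| + 1) (fun i _ => by positivity) hz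
  omega

lemma domF_nonneg (F : Finset ℤ) : 0 ≤ domF F :=
  Finset.sum_nonneg fun i _ => by positivity

lemma not_mem_of_domF_le {F : Finset ℤ} {z : ℤ} (h : domF F ≤ |z|) : z ∉ F :=
  fun hz => absurd (lt_domF hz) (not_lt.mpr h)

/-- There is always an integer in the enumeration avoiding a finite set. -/
lemma exists_enum_not_mem (F : Finset ℤ) : ∃ k, enumZ k ∉ F := by
  by_contra h
  push_neg at h
  have : ¬ Function.Injective enumZ := by
    intro hinj
    have hmaps : ∀ k ∈ Finset.range (F.card + 1), enumZ k ∈ F := fun k _ => h k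
    have := Finset.card_le_card_of_injOn enumZ hmaps (Function.Injective.injOn hinj)
    simp at this
  exact this enumZ_injective

/-- Index of the least unhit integer. -/
noncomputable def luk (F : Finset ℤ) : ℕ :=
  Nat.find (exists_enum_not_mem F)

lemma enum_luk_not_mem (F : Finset ℤ) : enumZ (luk F) ∉ F := Nat.find_spec (exists_enum_not_mem F)

lemma enum_mem_of_lt_luk {F : Finset ℤ} {j : ℕ} (hj : j < luk F) : enumZ j ∈ F := by
  have := Nat.find_min (exists_enum_not_mem F) hj
  simpa using this

lemma luk_eq {F : Finset ℤ} {K : ℕ} (h1 : enumZ K ∉ F) (h2 : ∀ j < K, enumZ j ∈ F) :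
    luk F = K := by
  have ha : luk F ≤ K := Nat.find_le h1
  rcases lt_or_eq_of_le ha with h | h
  · exact absurd (h2 _ h) (enum_luk_not_mem F)
  · exact h

end HLP



namespace HLP

variable {V : Type*} [DecidableEq V]


/-- Core extension lemma: distribute a prescribed sum `S` over a finite set `C`
of at least two slots, using pairwise distinct fresh values. -/
lemma exists_assignment (C : Finset V) (hC : 2 ≤ C.card) (F : Finset ℤ) (S : ℤ) :
    ∃ g : V → ℤ, Set.InjOn g C ∧ (∀ v ∈ C, g v ∉ F) ∧ (∑ v ∈ C, g v = S) ∧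
      (∀ v, v ∉ C → g v = 0) := by
  set k := C.card with hk
  set Tf : ℤ := ∑ j ∈ Finset.range k, (j : ℤ) with hTf
  set a : ℤ := domF F + |S| + (k : ℤ) + Tf + 1 with hadef
  set T : ℤ := ∑ j ∈ Finset.range (k - 1), (j : ℤ) with hT
  set L : ℤ := S - ((k : ℤ) - 1) * a - T with hL
  have hT0 : 0 ≤ T := Finset.sum_nonneg fun i _ => by positivity
  have hTfle : T ≤ Tf := by
    refine Finset.sum_le_sum_of_subset_of_nonneg ?_ (fun i _ _ => by positivity)
    exact Finset.range_subset_range.mpr (by omega)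
  have hdF := domF_nonneg F
  have habs1 : S ≤ |S| := le_abs_self S
  have habs2 : -|S| ≤ S := neg_abs_le S
  have ha : domF F < a := by
    have : (0:ℤ) ≤ (k:ℤ) := by positivity
    omega
  have ha0 : 0 < a := by omega
  -- the value assigned to slot `i`
  set val : ℕ → ℤ := fun i => if i = k - 1 then L else a + i with hval
  have hLneg : L ≤ -(domF F) - 1 := by
    have h1 : ((k : ℤ) - 1) * a ≥ a := by
      have hk2 : (2:ℤ) ≤ (k:ℤ) := by exact_mod_cast hC
      nlinarith
    omega
  have hblock : ∀ i : ℕ, i < k - 1 → val i = a + i ∧ domF F < val i := by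
    intro i hi
    constructor
    · simp only [hval]; rw [if_neg (by omega)]
    · simp only [hval]; rw [if_neg (by omega)]
      have : (0:ℤ) ≤ (i:ℤ) := by positivity
      omega
  have hfresh : ∀ i : ℕ, i < k → val i ∉ F := by
    intro i hi hmem
    have := lt_domF hmem
    rcases Nat.lt_or_ge i (k-1) with h | h
    · have h2 := (hblock i h).2
      have h3 := (hblock i h).1
      rw [abs_of_pos (by omega)] at this
      omega
    · have hik : i = k - 1 := by omega
      have : |val i| < domF F := this
      rw [hik] at this
      simp only [hval, if_pos rfl] at this
      rw [abs_of_neg (by omega)] at this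
      omega
  have hinj : ∀ i j : ℕ, i < k → j < k → val i = val j → i = j := by
    intro i j hi hj hij
    rcases Nat.lt_or_ge i (k-1) with h | h <;> rcases Nat.lt_or_ge j (k-1) with h' | h'
    · have := (hblock i h).1; have := (hblock j h').1
      omega
    · have hik : j = k - 1 := by omega
      have h1 := (hblock i h).1
      rw [h1, hik] at hij
      simp only [hval, if_pos rfl] at hij
      have h2 := (hblock i h).2
      rw [h1] at h2
      omega
    · have hik : i = k - 1 := by omega
      have h1 := (hblock j h').1
      rw [h1, hik] at hij
      simp only [hval, if_pos rfl] at hij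
      have h2 := (hblock j h').2
      rw [h1] at h2
      omega
    · omega
  have hsum : ∑ i ∈ Finset.range k, val i = S := by
    have hk1 : k = (k - 1) + 1 := by omega
    rw [hk1, Finset.sum_range_succ]
    have h1 : ∀ i ∈ Finset.range (k-1), val i = a + i := fun i hi =>
      (hblock i (Finset.mem_range.mp hi)).1
    rw [Finset.sum_congr rfl h1]
    have h2 : val (k - 1) = L := by simp [hval]
    rw [h2, Finset.sum_add_distrib, Finset.sum_const, Finset.card_range, hL]
    push_cast
    have : ((k:ℤ) - 1) = ((k - 1 : ℕ) : ℤ) := by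
      have h9 : 1 ≤ k := by omega
      omega
    rw [this]
    ring
  -- now transfer to `C` via an equivalence with `Fin k`
  set e := C.equivFin with he
  refine ⟨fun v => if h : v ∈ C then val (e ⟨v, h⟩) else 0, ?_, ?_, ?_, ?_⟩
  · intro x hx y hy hxy
    simp only [Finset.mem_coe] at hx hy
    dsimp only at hxy
    rw [dif_pos hx, dif_pos hy] at hxy
    have h1 := hinj _ _ (e ⟨x, hx⟩).isLt (e ⟨y, hy⟩).isLt hxy
    have h2 : e ⟨x, hx⟩ = e ⟨y, hy⟩ := Fin.ext h1
    have := e.injective h2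
    exact Subtype.mk_eq_mk.mp this
  · intro v hv
    dsimp only
    rw [dif_pos hv]
    exact hfresh _ (e ⟨v, hv⟩).isLt
  · rw [← Finset.sum_attach C (fun v => if h : v ∈ C then val (e ⟨v, h⟩) else 0)]
    have h1 : ∀ x : {y // y ∈ C},
        (if h : (x : V) ∈ C then val (e ⟨x, h⟩) else 0) = val (e x) := by
      intro x; rw [dif_pos x.2]
    rw [Finset.sum_congr rfl (fun x _ => h1 x)]
    rw [← hsum, ← Fin.sum_univ_eq_sum_range val, ← Equiv.sum_comp e (fun i => val i)]
    simp [Finset.sum_attach]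
  · intro v hv
    dsimp only
    rw [dif_neg hv]

end HLP

namespace HLP

variable {V : Type*} [DecidableEq V]


/-- Assign fresh disjoint values with prescribed sums to the children sets of a
finite family of parents. -/
lemma exists_multi_assignment (P : Finset V) (Ch : V → Finset V)
    (hdisj : ∀ p ∈ P, ∀ q ∈ P, p ≠ q → Disjoint (Ch p) (Ch q))
    (hk : ∀ p ∈ P, 2 ≤ (Ch p).card) (Sf : V → ℤ) (F : Finset ℤ) :
    ∃ g : V → ℤ, Set.InjOn g (P.biUnion Ch) ∧ (∀ v ∈ P.biUnion Ch, g v ∉ F) ∧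
      (∀ p ∈ P, ∑ v ∈ Ch p, g v = Sf p) ∧ (∀ v, v ∉ P.biUnion Ch → g v = 0) := by
  classical
  induction P using Finset.induction_on with
  | empty => exact ⟨fun _ => 0, by simp [Set.InjOn], by simp, by simp, by simp⟩
  | @insert p P hp IH =>
    obtain ⟨g, hg1, hg2, hg3, hg4⟩ :=
      IH (fun x hx y hy hxy => hdisj x (mem_insert_of_mem hx) y (mem_insert_of_mem hy) hxy)
        (fun x hx => hk x (mem_insert_of_mem hx))
    obtain ⟨h, hh1, hh2, hh3, hh4⟩ :=
      exists_assignment (Ch p) (hk p (mem_insert_self p P))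
        (F ∪ (P.biUnion Ch).image g) (Sf p)
    have hdisjp : ∀ v ∈ P.biUnion Ch, v ∉ Ch p := by
      intro v hv hvp
      obtain ⟨q, hq, hvq⟩ := Finset.mem_biUnion.mp hv
      have hne : p ≠ q := fun hpq => hp (hpq ▸ hq)
      exact (hdisj p (mem_insert_self p P) q (mem_insert_of_mem hq) hne).forall_ne_finset
        hvp hvq rfl
    refine ⟨fun v => if v ∈ Ch p then h v else g v, ?_, ?_, ?_, ?_⟩
    · intro x hx y hy hxy
      dsimp only at hxy
      have hx' : x ∈ Ch p ∪ P.biUnion Ch := by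
        rw [← Finset.biUnion_insert]; exact Finset.mem_coe.mp hx
      have hy' : y ∈ Ch p ∪ P.biUnion Ch := by
        rw [← Finset.biUnion_insert]; exact Finset.mem_coe.mp hy
      by_cases hxc : x ∈ Ch p <;> by_cases hyc : y ∈ Ch p
      · rw [if_pos hxc, if_pos hyc] at hxy
        exact hh1 hxc hyc hxy
      · rw [if_pos hxc, if_neg hyc] at hxy
        have hyb : y ∈ P.biUnion Ch := by
          rcases Finset.mem_union.mp hy' with h' | h'
          · exact absurd h' hyc
          · exact h'
        exfalso
        have : h x ∉ F ∪ (P.biUnion Ch).image g := hh2 x hxc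
        rw [Finset.mem_union] at this
        push_neg at this
        exact this.2 (Finset.mem_image.mpr ⟨y, hyb, hxy.symm⟩)
      · rw [if_neg hxc, if_pos hyc] at hxy
        have hxb : x ∈ P.biUnion Ch := by
          rcases Finset.mem_union.mp hx' with h' | h'
          · exact absurd h' hxc
          · exact h'
        exfalso
        have : h y ∉ F ∪ (P.biUnion Ch).image g := hh2 y hyc
        rw [Finset.mem_union] at this
        push_neg at this
        exact this.2 (Finset.mem_image.mpr ⟨x, hxb, hxy⟩)
      · rw [if_neg hxc, if_neg hyc] at hxy
        have hxb : x ∈ P.biUnion Ch := by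
          rcases Finset.mem_union.mp hx' with h' | h'
          · exact absurd h' hxc
          · exact h'
        have hyb : y ∈ P.biUnion Ch := by
          rcases Finset.mem_union.mp hy' with h' | h'
          · exact absurd h' hyc
          · exact h'
        exact hg1 (Finset.mem_coe.mpr hxb) (Finset.mem_coe.mpr hyb) hxy
    · intro v hv
      dsimp only
      rw [Finset.biUnion_insert, Finset.mem_union] at hv
      by_cases hvc : v ∈ Ch p
      · rw [if_pos hvc]
        have := hh2 v hvc
        rw [Finset.mem_union] at this
        push_neg at this
        exact this.1
      · rw [if_neg hvc]
        rcases hv with h' | h'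
        · exact absurd h' hvc
        · exact hg2 v h'
    · intro q hq
      rcases Finset.mem_insert.mp hq with rfl | hq'
      · rw [Finset.sum_congr rfl (fun v hv => if_pos hv)]
        exact hh3
      · have : ∀ v ∈ Ch q, v ∉ Ch p := by
          intro v hv
          have hne : p ≠ q := fun hpq => hp (hpq ▸ hq')
          exact fun hvp => (hdisj p (mem_insert_self p P) q (mem_insert_of_mem hq') hne
            ).forall_ne_finset hvp hv rfl
        rw [Finset.sum_congr rfl (fun v hv => if_neg (this v hv))]
        exact hg3 q hq'
    · intro v hv
      dsimp only
      rw [Finset.biUnion_insert, Finset.mem_union] at hv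
      push_neg at hv
      rw [if_neg hv.1]
      exact hg4 v hv.2

/-- Choice of a "knob" value `v`, whose companion `S - v` and whose future
companion `dd*v - w - t'` are all fresh and pairwise distinct. -/
lemma exists_knob (F : Finset ℤ) (S w t' : ℤ) (dd : ℤ) (hdd : 3 ≤ dd) :
    ∃ v : ℤ, v ∉ F ∧ (S - v) ∉ F ∧ v ≠ S - v ∧ (dd * v - w - t') ∉ F ∧
      dd * v - w - t' ≠ v ∧ dd * v - w - t' ≠ S - v := by
  set D := domF F with hD
  have hD0 : 0 ≤ D := domF_nonneg F
  set v : ℤ := D + |S| + |w| + |t'| + 1 with hv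
  have hS1 := le_abs_self S; have hS2 := neg_abs_le S
  have hw1 := le_abs_self w; have hw2 := neg_abs_le w
  have ht1 := le_abs_self t'; have ht2 := neg_abs_le t'
  have habsS : 0 ≤ |S| := abs_nonneg S
  have habsw : 0 ≤ |w| := abs_nonneg w
  have habst : 0 ≤ |t'| := abs_nonneg t'
  have hv0 : 0 < v := by omega
  have h3v : 3 * v ≤ dd * v := by nlinarith
  refine ⟨v, ?_, ?_, ?_, ?_, ?_, ?_⟩
  · exact not_mem_of_domF_le (by rw [abs_of_pos hv0]; omega)
  · exact not_mem_of_domF_le (by rw [abs_of_neg (by omega : S - v < 0)]; omega)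
  · omega
  · exact not_mem_of_domF_le (by rw [abs_of_pos (by omega : 0 < dd * v - w - t')]; omega)
  · omega
  · omega

end HLP



namespace HLP

variable {V : Type*} [DecidableEq V] {G : SimpleGraph V}

lemma path_length_eq (hG : G.IsAcyclic) {u v : V} (p : G.Walk u v) (hp : p.IsPath) :
    p.length = G.dist u v := by
  have hr : G.Reachable u v := ⟨p⟩
  obtain ⟨q, hq, hql⟩ := hr.exists_path_of_dist
  have : (⟨p, hp⟩ : G.Path u v) = ⟨q, hq⟩ := hG.path_unique _ _
  have hpq : p = q := congrArg Subtype.val this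
  rw [hpq, hql]

lemma concat_isPath {x y : V} {p : G.Walk x y} (hp : p.IsPath) {z : V} (h : G.Adj y z)
    (hz : z ∉ p.support) : (p.concat h).IsPath := by
  have h1 : (p.concat h).reverse.IsPath := by
    rw [SimpleGraph.Walk.reverse_concat]
    refine (SimpleGraph.Walk.cons_isPath_iff _ _).2 ⟨hp.reverse, ?_⟩
    rwa [SimpleGraph.Walk.support_reverse, List.mem_reverse]
  have := h1.reverse
  rwa [SimpleGraph.Walk.reverse_reverse] at this

lemma dist_le_of_mem_support (hG : G.IsAcyclic) {r u z : V} {p : G.Walk r u} (hp : p.IsPath)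
    (hz : z ∈ p.support) : G.dist r z ≤ p.length := by
  have h1 : (p.takeUntil z hz).length = G.dist r z :=
    path_length_eq hG _ (hp.takeUntil hz)
  have h2 := SimpleGraph.Walk.length_takeUntil_le p hz
  omega

lemma adj_dist_cases (hG : G.IsTree) (r : V) {x y : V} (h : G.Adj x y) :
    G.dist r y = G.dist r x + 1 ∨ G.dist r x = G.dist r y + 1 := by
  obtain ⟨p, hp, hpl⟩ := hG.isConnected.exists_path_of_dist r x
  by_cases hy : y ∈ p.support
  · right
    have h1 : (p.takeUntil y hy).length = G.dist r y :=
      path_length_eq hG.IsAcyclic _ (hp.takeUntil hy)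
    have h2 : (p.dropUntil y hy).length = G.dist y x :=
      path_length_eq hG.IsAcyclic _ (hp.dropUntil hy)
    have h3 : G.dist y x = 1 := SimpleGraph.dist_eq_one_iff_adj.mpr h.symm
    have h4 := congrArg SimpleGraph.Walk.length (p.take_spec hy)
    rw [SimpleGraph.Walk.length_append] at h4
    omega
  · left
    have h1 : (p.concat h).IsPath := concat_isPath hp h hy
    have h2 : (p.concat h).length = G.dist r y := path_length_eq hG.IsAcyclic _ h1
    rw [SimpleGraph.Walk.length_concat] at h2
    omega

lemma exists_unique_parent (hG : G.IsTree) {r x : V} (hx : x ≠ r) :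
    ∃! y, G.Adj x y ∧ G.dist r y + 1 = G.dist r x := by
  have hd0 : 0 < G.dist r x := hG.isConnected.pos_dist_of_ne (Ne.symm hx)
  obtain ⟨p, hp, hpl⟩ := hG.isConnected.exists_path_of_dist r x
  have hrev : p.reverse.IsPath := hp.reverse
  have hex : ∃ y, G.Adj x y ∧ G.dist r y + 1 = G.dist r x := by
    cases hpr : p.reverse with
    | nil =>
        exfalso
        have h0 := congrArg SimpleGraph.Walk.length hpr
        rw [SimpleGraph.Walk.length_reverse] at h0
        simp only [SimpleGraph.Walk.length_nil] at h0
        omega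
    | @cons _ y _ ha q =>
        refine ⟨y, ha, ?_⟩
        have hq : q.IsPath := by
          rw [hpr] at hrev
          exact ((SimpleGraph.Walk.cons_isPath_iff _ _).1 hrev).1
        have h1 : q.reverse.length = G.dist r y :=
          path_length_eq hG.IsAcyclic _ hq.reverse
        rw [SimpleGraph.Walk.length_reverse] at h1
        have h2 : q.length + 1 = p.length := by
          have := congrArg SimpleGraph.Walk.length hpr
          rw [SimpleGraph.Walk.length_reverse] at this
          simp [SimpleGraph.Walk.length_cons] at this
          omega
        omega
  have huniq : ∀ y1 y2, (G.Adj x y1 ∧ G.dist r y1 + 1 = G.dist r x) →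
      (G.Adj x y2 ∧ G.dist r y2 + 1 = G.dist r x) → y1 = y2 := by
    rintro y1 y2 ⟨ha1, hd1⟩ ⟨ha2, hd2⟩
    obtain ⟨p1, hp1, hpl1⟩ := hG.isConnected.exists_path_of_dist r y1
    obtain ⟨p2, hp2, hpl2⟩ := hG.isConnected.exists_path_of_dist r y2
    have hx1 : x ∉ p1.support := by
      intro hmem
      have := dist_le_of_mem_support hG.IsAcyclic hp1 hmem
      omega
    have hx2 : x ∉ p2.support := by
      intro hmem
      have := dist_le_of_mem_support hG.IsAcyclic hp2 hmem
      omega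
    have hq1 : (p1.concat ha1.symm).IsPath := concat_isPath hp1 ha1.symm hx1
    have hq2 : (p2.concat ha2.symm).IsPath := concat_isPath hp2 ha2.symm hx2
    have : (⟨p1.concat ha1.symm, hq1⟩ : G.Path r x) = ⟨p2.concat ha2.symm, hq2⟩ :=
      hG.IsAcyclic.path_unique _ _
    have heq : p1.concat ha1.symm = p2.concat ha2.symm := congrArg Subtype.val this
    obtain ⟨hv, -⟩ := SimpleGraph.Walk.concat_inj heq
    exact hv
  obtain ⟨y, hy⟩ := hex
  exact ⟨y, hy, fun z hz => huniq z y hz hy⟩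

open Classical in
/-- The parent of a vertex (junk value `r` at the root). -/
noncomputable def par (G : SimpleGraph V) (r x : V) : V :=
  if h : ∃ y, G.Adj x y ∧ G.dist r y + 1 = G.dist r x then h.choose else r

lemma par_spec (hG : G.IsTree) {r x : V} (hx : x ≠ r) :
    G.Adj x (par G r x) ∧ G.dist r (par G r x) + 1 = G.dist r x := by
  have h := exists_unique_parent hG hx
  rw [par, dif_pos h.exists]
  exact h.exists.choose_spec

lemma par_eq_of (hG : G.IsTree) {r x y : V} (hx : x ≠ r)
    (h : G.Adj x y ∧ G.dist r y + 1 = G.dist r x) : par G r x = y := by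
  have hu := exists_unique_parent hG hx
  exact hu.unique (par_spec hG hx) h

end HLP

namespace HLP

variable {V : Type*} [DecidableEq V] {G : SimpleGraph V} [G.LocallyFinite]

/-- The set of children of `x` in the tree rooted at `r`. -/
noncomputable def childs (G : SimpleGraph V) [G.LocallyFinite] (r x : V) : Finset V :=
  (G.neighborFinset x).filter (fun y => G.dist r y = G.dist r x + 1)

lemma mem_childs {r x y : V} :
    y ∈ childs G r x ↔ G.Adj x y ∧ G.dist r y = G.dist r x + 1 := by
  simp [childs, Finset.mem_filter, SimpleGraph.mem_neighborFinset]

lemma par_root (G : SimpleGraph V) (r : V) : par G r r = r := by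
  rw [par, dif_neg]
  rintro ⟨y, -, h⟩
  rw [SimpleGraph.dist_self] at h
  omega

lemma par_not_mem_childs (hG : G.IsTree) {r x : V} : par G r x ∉ childs G r x := by
  by_cases hx : x = r
  · subst hx
    rw [par_root, mem_childs]
    rintro ⟨-, hd⟩
    omega
  · have h := (par_spec hG hx).2
    rw [mem_childs]
    rintro ⟨-, hd⟩
    omega

lemma neighborFinset_eq (hG : G.IsTree) {r x : V} (hx : x ≠ r) :
    G.neighborFinset x = insert (par G r x) (childs G r x) := by
  ext y
  rw [SimpleGraph.mem_neighborFinset, Finset.mem_insert, mem_childs]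
  constructor
  · intro h
    rcases adj_dist_cases hG r h with h' | h'
    · exact Or.inr ⟨h, h'⟩
    · exact Or.inl ((par_eq_of hG hx ⟨h, by omega⟩).symm)
  · rintro (rfl | ⟨h, -⟩)
    · exact (par_spec hG hx).1
    · exact h

lemma neighborFinset_eq_root (hG : G.IsTree) {r : V} :
    G.neighborFinset r = childs G r r := by
  ext y
  rw [SimpleGraph.mem_neighborFinset, mem_childs]
  constructor
  · intro h
    refine ⟨h, ?_⟩
    rcases adj_dist_cases hG r h with h' | h'
    · exact h'
    · exfalso
      rw [SimpleGraph.dist_self] at h'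
      omega
  · exact fun h => h.1

lemma childs_card (hG : G.IsTree) {d : ℕ} (hreg : ∀ v, G.degree v = d) {r x : V} (hx : x ≠ r) :
    (childs G r x).card + 1 = d := by
  have h1 := hreg x
  rw [← SimpleGraph.card_neighborFinset_eq_degree, neighborFinset_eq hG hx,
    Finset.card_insert_of_notMem (par_not_mem_childs hG)] at h1
  omega

lemma childs_card_root (hG : G.IsTree) {d : ℕ} (hreg : ∀ v, G.degree v = d) {r : V} :
    (childs G r r).card = d := by
  have h1 := hreg r
  rw [← SimpleGraph.card_neighborFinset_eq_degree, neighborFinset_eq_root hG] at h1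
  exact h1

lemma ne_root_of_mem_childs {r x y : V} (hy : y ∈ childs G r x) : y ≠ r := by
  rw [mem_childs] at hy
  intro h
  rw [h, SimpleGraph.dist_self] at hy
  omega

lemma par_of_mem_childs (hG : G.IsTree) {r x y : V} (hy : y ∈ childs G r x) :
    par G r y = x := by
  rw [mem_childs] at hy
  exact par_eq_of hG (by
    intro h
    rw [h, SimpleGraph.dist_self] at hy
    omega) ⟨hy.1.symm, by omega⟩

lemma childs_disjoint (hG : G.IsTree) {r x1 x2 : V} (h : x1 ≠ x2) :
    Disjoint (childs G r x1) (childs G r x2) := by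
  rw [Finset.disjoint_left]
  intro y hy1 hy2
  exact h ((par_of_mem_childs hG hy1).symm.trans (par_of_mem_childs hG hy2))

lemma ball_finite (hG : G.IsTree) (r : V) (n : ℕ) : {x : V | G.dist r x ≤ n}.Finite := by
  induction n with
  | zero =>
      refine Set.Finite.subset (Set.finite_singleton r) ?_
      intro x hx
      simp only [Set.mem_setOf_eq, Nat.le_zero] at hx
      have := (hG.isConnected.dist_eq_zero_iff (u := r) (v := x)).1 hx
      simp [this.symm]
  | succ n ih =>
      have h2 : {x : V | G.dist r x ≤ n + 1} ⊆
          {x : V | G.dist r x ≤ n} ∪ ⋃ y ∈ {x : V | G.dist r x ≤ n}, (G.neighborSet y) := by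
        intro x hx
        simp only [Set.mem_setOf_eq] at hx
        rcases Nat.lt_or_ge (G.dist r x) (n + 1) with h | h
        · exact Or.inl (by simpa using Nat.lt_succ_iff.mp h)
        · have hdx : G.dist r x = n + 1 := by omega
          have hxr : x ≠ r := by
            intro hx'
            rw [hx', SimpleGraph.dist_self] at hdx
            omega
          obtain ⟨ha, hd⟩ := par_spec hG (r := r) hxr
          refine Or.inr ?_
          simp only [Set.mem_iUnion, Set.mem_setOf_eq]
          exact ⟨par G r x, by omega, ha.symm⟩
      refine Set.Finite.subset (Set.Finite.union ih ?_) h2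
      refine Set.Finite.biUnion ih (fun y _ => (G.neighborSet y).toFinite)

/-- The ball of radius `n` around `r`, as a finset. -/
noncomputable def ballF (hG : G.IsTree) (r : V) (n : ℕ) : Finset V :=
  (ball_finite hG r n).toFinset

lemma mem_ballF {hG : G.IsTree} {r : V} {n : ℕ} {x : V} :
    x ∈ ballF hG r n ↔ G.dist r x ≤ n := by
  simp [ballF]

/-- The sphere of radius `n` around `r`, as a finset. -/
noncomputable def lvlF (hG : G.IsTree) (r : V) (n : ℕ) : Finset V :=
  (ballF hG r n).filter (fun x => G.dist r x = n)

lemma mem_lvlF {hG : G.IsTree} {r : V} {n : ℕ} {x : V} :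
    x ∈ lvlF hG r n ↔ G.dist r x = n := by
  simp only [lvlF, Finset.mem_filter, mem_ballF]
  constructor
  · exact fun h => h.2
  · exact fun h => ⟨le_of_eq h, h⟩

lemma root_mem_lvlF {hG : G.IsTree} {r : V} : r ∈ lvlF hG r 0 := by
  rw [mem_lvlF, SimpleGraph.dist_self]

lemma lvlF_zero {hG : G.IsTree} {r : V} : lvlF hG r 0 = {r} := by
  ext x
  rw [mem_lvlF, Finset.mem_singleton]
  constructor
  · intro h
    exact ((hG.isConnected.dist_eq_zero_iff).1 h).symm
  · rintro rfl
    exact SimpleGraph.dist_self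

lemma ballF_succ {hG : G.IsTree} {r : V} {n : ℕ} :
    ballF hG r (n + 1) = ballF hG r n ∪ lvlF hG r (n + 1) := by
  ext x
  rw [mem_ballF, Finset.mem_union, mem_ballF, mem_lvlF]
  omega

lemma childs_subset_lvlF {hG : G.IsTree} {r x : V} {n : ℕ} (hx : x ∈ lvlF hG r n) :
    childs G r x ⊆ lvlF hG r (n + 1) := by
  intro y hy
  rw [mem_childs] at hy
  rw [mem_lvlF, hy.2, (mem_lvlF).1 hx]

lemma lvlF_succ_eq {hG : G.IsTree} {r : V} {n : ℕ} :
    lvlF hG r (n + 1) = (lvlF hG r n).biUnion (childs G r) := by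
  ext y
  rw [Finset.mem_biUnion]
  constructor
  · intro hy
    have hdy : G.dist r y = n + 1 := (mem_lvlF).1 hy
    have hyr : y ≠ r := by
      intro h
      rw [h, SimpleGraph.dist_self] at hdy
      omega
    obtain ⟨ha, hd⟩ := par_spec hG (r := r) hyr
    refine ⟨par G r y, ?_, ?_⟩
    · rw [mem_lvlF]; omega
    · rw [mem_childs]
      exact ⟨ha.symm, by omega⟩
  · rintro ⟨x, hx, hy⟩
    exact childs_subset_lvlF hx hy

lemma lvlF_nonempty (hG : G.IsTree) {d : ℕ} (hreg : ∀ v, G.degree v = d) (hd : 3 ≤ d)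
    (r : V) (n : ℕ) : (lvlF hG r n).Nonempty := by
  induction n with
  | zero => exact ⟨r, root_mem_lvlF⟩
  | succ n ih =>
      obtain ⟨x, hx⟩ := ih
      have hne : (childs G r x).Nonempty := by
        rw [← Finset.card_pos]
        by_cases hxr : x = r
        · rw [hxr, childs_card_root hG hreg]; omega
        · have := childs_card hG hreg (r := r) hxr
          omega
      obtain ⟨y, hy⟩ := hne
      exact ⟨y, childs_subset_lvlF hx hy⟩

lemma two_le_lvlF_card (hG : G.IsTree) {d : ℕ} (hreg : ∀ v, G.degree v = d) (hd : 3 ≤ d)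
    (r : V) {n : ℕ} (hn : 1 ≤ n) : 2 ≤ (lvlF hG r n).card := by
  obtain ⟨m, rfl⟩ : ∃ m, n = m + 1 := ⟨n - 1, by omega⟩
  obtain ⟨x, hx⟩ := lvlF_nonempty hG hreg hd r m
  have h1 : 2 ≤ (childs G r x).card := by
    by_cases hxr : x = r
    · rw [hxr, childs_card_root hG hreg]; omega
    · have := childs_card hG hreg (r := r) hxr
      omega
  exact le_trans h1 (Finset.card_le_card (childs_subset_lvlF hx))

end HLP


open Finset SimpleGraph
set_option linter.unusedSectionVars false
set_option maxHeartbeats 1000000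

namespace HLP

variable {V : Type*} [DecidableEq V] {G : SimpleGraph V} [G.LocallyFinite]
variable {d : ℕ} {r : V}

/-- The set of values used on the ball of radius `n`. -/
noncomputable def usedF (hG : G.IsTree) (r : V) (n : ℕ) (f : V → ℤ) : Finset ℤ :=
  (ballF hG r n).image f

/-- The prescribed sum of children values of a vertex `p`. -/
noncomputable def Sval (G : SimpleGraph V) (r : V) (d : ℕ) (f : V → ℤ) (p : V) : ℤ :=
  (d : ℤ) * f p - (if p = r then 0 else f (par G r p))

/-- The invariant carried through the inductive construction. -/
structure Good (hG : G.IsTree) (r : V) (d : ℕ) (n : ℕ) (f : V → ℤ) : Prop where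
  inj : Set.InjOn f (ballF hG r n)
  harm : ∀ x : V, G.dist r x < n → (d : ℤ) * f x = ∑ y ∈ G.neighborFinset x, f y
  hits : ∀ k, k < n → enumZ k ∈ usedF hG r n f
  des : d = 3 → 1 ≤ n → ∃ x, G.dist r x = n ∧
      (d : ℤ) * f x - f (par G r x) - enumZ (luk (usedF hG r n f)) ∉
        insert (enumZ (luk (usedF hG r n f))) (usedF hG r n f)

lemma good_zero (hG : G.IsTree) : Good hG r d 0 (fun _ => (0 : ℤ)) := by
  constructor
  · intro x hx y hy _
    simp only [Finset.mem_coe, mem_ballF, Nat.le_zero] at hx hy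
    have hx' := (hG.isConnected.dist_eq_zero_iff).1 hx
    have hy' := (hG.isConnected.dist_eq_zero_iff).1 hy
    rw [← hx', ← hy']
  · intro x hx
    omega
  · intro k hk
    omega
  · intro _ h
    omega

/-- Assembly: given suitable fresh values `g` for the new level, extend the labeling. -/
lemma assemble (hG : G.IsTree) (hreg : ∀ v, G.degree v = d) (hd : 3 ≤ d) {n : ℕ} {f : V → ℤ}
    (hGood : Good hG r d n f) (g : V → ℤ)
    (H1 : Set.InjOn g (lvlF hG r (n + 1)))
    (H2 : ∀ v ∈ lvlF hG r (n + 1), g v ∉ usedF hG r n f)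
    (H3 : ∀ p ∈ lvlF hG r n, ∑ y ∈ childs G r p, g y = Sval G r d f p)
    (H4 : ∃ v ∈ lvlF hG r (n + 1), g v = enumZ (luk (usedF hG r n f)))
    (H5 : d = 3 → ∃ x ∈ lvlF hG r (n + 1),
        (d : ℤ) * g x - (fun z => if G.dist r z ≤ n then f z else g z) (par G r x) -
            enumZ (luk (usedF hG r (n + 1) (fun z => if G.dist r z ≤ n then f z else g z))) ∉
          insert
            (enumZ (luk (usedF hG r (n + 1) (fun z => if G.dist r z ≤ n then f z else g z))))
            (usedF hG r (n + 1) (fun z => if G.dist r z ≤ n then f z else g z))) :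
    ∃ f', Good hG r d (n + 1) f' ∧ ∀ x ∈ ballF hG r n, f' x = f x := by
  set f' : V → ℤ := fun z => if G.dist r z ≤ n then f z else g z with hf'
  have F1 : ∀ x : V, G.dist r x ≤ n → f' x = f x := by
    intro x hx
    simp only [hf', if_pos hx]
  have F2 : ∀ x ∈ lvlF hG r (n + 1), f' x = g x := by
    intro x hx
    rw [mem_lvlF] at hx
    simp only [hf']
    rw [if_neg (by omega)]
  have Fball : ∀ x ∈ ballF hG r n, f' x = f x := by
    intro x hx
    exact F1 x (mem_ballF.1 hx)
  have hused : usedF hG r (n + 1) f' = usedF hG r n f ∪ (lvlF hG r (n + 1)).image g := by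
    rw [usedF, ballF_succ, Finset.image_union]
    congr 1
    · exact Finset.image_congr (fun x hx => Fball x hx)
    · exact Finset.image_congr (fun x hx => F2 x hx)
  refine ⟨f', ?_, Fball⟩
  constructor
  · -- injectivity
    intro x hx y hy hxy
    simp only [Finset.mem_coe, mem_ballF] at hx hy
    by_cases hxn : G.dist r x ≤ n <;> by_cases hyn : G.dist r y ≤ n
    · rw [F1 x hxn, F1 y hyn] at hxy
      exact hGood.inj (Finset.mem_coe.2 (mem_ballF.2 hxn)) (Finset.mem_coe.2 (mem_ballF.2 hyn))
        hxy
    · have hy1 : y ∈ lvlF hG r (n + 1) := mem_lvlF.2 (by omega)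
      rw [F1 x hxn, F2 y hy1] at hxy
      exfalso
      exact H2 y hy1 (hxy ▸ Finset.mem_image.2 ⟨x, mem_ballF.2 hxn, rfl⟩)
    · have hx1 : x ∈ lvlF hG r (n + 1) := mem_lvlF.2 (by omega)
      rw [F2 x hx1, F1 y hyn] at hxy
      exfalso
      exact H2 x hx1 (hxy.symm ▸ Finset.mem_image.2 ⟨y, mem_ballF.2 hyn, rfl⟩)
    · have hx1 : x ∈ lvlF hG r (n + 1) := mem_lvlF.2 (by omega)
      have hy1 : y ∈ lvlF hG r (n + 1) := mem_lvlF.2 (by omega)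
      rw [F2 x hx1, F2 y hy1] at hxy
      exact H1 (Finset.mem_coe.2 hx1) (Finset.mem_coe.2 hy1) hxy
  · -- harmonicity
    intro x hx
    rcases Nat.lt_or_ge (G.dist r x) n with hlt | hge
    · have hnb : ∀ y ∈ G.neighborFinset x, f' y = f y := by
        intro y hy
        have hadj : G.Adj x y := by simpa using hy
        rcases adj_dist_cases hG r hadj with h' | h'
        · exact F1 y (by omega)
        · exact F1 y (by omega)
      rw [F1 x (by omega), Finset.sum_congr rfl hnb]
      exact hGood.harm x hlt
    · have hdx : G.dist r x = n := by omega
      have hxl : x ∈ lvlF hG r n := mem_lvlF.2 hdx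
      have hchild : ∀ y ∈ childs G r x, f' y = g y := by
        intro y hy
        exact F2 y (childs_subset_lvlF hxl hy)
      by_cases hxr : x = r
      · rw [hxr] at hchild hxl hdx ⊢
        rw [SimpleGraph.dist_self] at hdx
        have hsum : ∑ y ∈ childs G r r, f' y = Sval G r d f r := by
          rw [Finset.sum_congr rfl hchild]
          exact H3 r hxl
        rw [neighborFinset_eq_root hG, hsum,
          F1 r (by rw [SimpleGraph.dist_self]; omega), Sval, if_pos rfl]
        ring
      · have hpar := (par_spec hG hxr).2
        have hsum : ∑ y ∈ childs G r x, f' y = Sval G r d f x := by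
          rw [Finset.sum_congr rfl hchild]
          exact H3 x hxl
        rw [neighborFinset_eq hG hxr,
          Finset.sum_insert (par_not_mem_childs hG), hsum, Sval, if_neg hxr,
          F1 (par G r x) (by omega), F1 x (by omega)]
        ring
  · -- hits
    intro k hk
    rw [hused]
    rcases Nat.lt_or_ge k n with h | h
    · exact Finset.mem_union_left _ (hGood.hits k h)
    · have hkn : k = n := by omega
      rw [hkn]
      have hKn : n ≤ luk (usedF hG r n f) := by
        by_contra hcon
        push_neg at hcon
        exact enum_luk_not_mem _ (hGood.hits _ hcon)
      rcases Nat.lt_or_ge n (luk (usedF hG r n f)) with h' | h'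
      · exact Finset.mem_union_left _ (enum_mem_of_lt_luk h')
      · have hlk : luk (usedF hG r n f) = n := by omega
        obtain ⟨v, hv1, hv2⟩ := H4
        rw [hlk] at hv2
        exact Finset.mem_union_right _ (Finset.mem_image.2 ⟨v, hv1, hv2⟩)
  · -- designated vertex
    intro hd3 _
    obtain ⟨x, hx1, hx2⟩ := H5 hd3
    refine ⟨x, mem_lvlF.1 hx1, ?_⟩
    rw [F2 x hx1]
    exact hx2

end HLP

namespace HLP

variable {V : Type*} [DecidableEq V] {G : SimpleGraph V} [G.LocallyFinite]
variable {d : ℕ} {r : V}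

lemma good_step_ge4 (hG : G.IsTree) (hreg : ∀ v, G.degree v = d) (hd : 3 ≤ d) (hd4 : d ≠ 3)
    {n : ℕ} {f : V → ℤ} (hGood : Good hG r d n f) :
    ∃ f', Good hG r d (n + 1) f' ∧ ∀ x ∈ ballF hG r n, f' x = f x := by
  classical
  set U := usedF hG r n f with hU
  set t := enumZ (luk U) with ht
  have ht_notU : t ∉ U := enum_luk_not_mem U
  obtain ⟨xs, hxs⟩ := lvlF_nonempty hG hreg hd r n
  have hcard3 : 3 ≤ (childs G r xs).card := by
    by_cases hxr : xs = r
    · rw [hxr, childs_card_root hG hreg]; omega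
    · have := childs_card hG hreg (r := r) hxr; omega
  obtain ⟨tc, htc⟩ : (childs G r xs).Nonempty := Finset.card_pos.1 (by omega)
  obtain ⟨g0, hg01, hg02, hg03, hg04⟩ :=
    exists_assignment ((childs G r xs).erase tc)
      (by rw [Finset.card_erase_of_mem htc]; omega) (insert t U) (Sval G r d f xs - t)
  set h0 : V → ℤ := fun v => if v = tc then t else g0 v with hh0
  set P := (lvlF hG r n).erase xs with hP
  have hPne : ∀ p ∈ P, p ≠ r → True := fun _ _ _ => trivial
  have hPcard : ∀ p ∈ P, 2 ≤ (childs G r p).card := by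
    intro p hp
    have hpx : p ≠ xs := (Finset.mem_erase.1 hp).1
    have hpl : p ∈ lvlF hG r n := (Finset.mem_erase.1 hp).2
    by_cases hpr : p = r
    · exfalso
      have hn0 : n = 0 := by
        have := mem_lvlF.1 hpl
        rw [hpr, SimpleGraph.dist_self] at this
        omega
      have hxsr : xs = r := by
        have := mem_lvlF.1 hxs
        rw [hn0] at this
        exact ((hG.isConnected.dist_eq_zero_iff).1 this).symm
      exact hpx (hpr.trans hxsr.symm)
    · have := childs_card hG hreg (r := r) hpr; omega
  obtain ⟨g1, hg11, hg12, hg13, hg14⟩ :=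
    exists_multi_assignment P (childs G r)
      (fun p _ q _ hpq => childs_disjoint hG hpq) hPcard (Sval G r d f)
      (U ∪ (childs G r xs).image h0)
  set g : V → ℤ := fun v => if v ∈ childs G r xs then h0 v else g1 v with hg
  have hLv : lvlF hG r n = insert xs P := (Finset.insert_erase hxs).symm
  have hLv1 : lvlF hG r (n + 1) = childs G r xs ∪ P.biUnion (childs G r) := by
    rw [lvlF_succ_eq, hLv, Finset.biUnion_insert]
  have hgch : ∀ v ∈ childs G r xs, g v = h0 v := fun v hv => by
    simp only [hg]; rw [if_pos hv]
  have hgP : ∀ v ∈ P.biUnion (childs G r), g v = g1 v := by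
    intro v hv
    obtain ⟨p, hp, hvp⟩ := Finset.mem_biUnion.1 hv
    have hpx : p ≠ xs := (Finset.mem_erase.1 hp).1
    have : v ∉ childs G r xs := fun hvx =>
      (childs_disjoint hG hpx (r := r)).forall_ne_finset hvp hvx rfl
    simp only [hg]; rw [if_neg this]
  have hh0fresh : ∀ v ∈ childs G r xs, h0 v ∉ U := by
    intro v hv
    simp only [hh0]
    by_cases hvt : v = tc
    · rw [if_pos hvt]; exact ht_notU
    · rw [if_neg hvt]
      have := hg02 v (Finset.mem_erase.2 ⟨hvt, hv⟩)
      simp only [Finset.mem_insert] at this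
      push_neg at this
      exact this.2
  have hg1fresh : ∀ v ∈ P.biUnion (childs G r), g1 v ∉ U ∧ g1 v ∉ (childs G r xs).image h0 := by
    intro v hv
    have := hg12 v hv
    rw [Finset.mem_union] at this
    push_neg at this
    exact this
  have hh0inj : Set.InjOn h0 (childs G r xs) := by
    intro a ha b hb hab
    simp only [Finset.mem_coe] at ha hb
    simp only [hh0] at hab
    by_cases hat : a = tc <;> by_cases hbt : b = tc
    · rw [hat, hbt]
    · rw [if_pos hat, if_neg hbt] at hab
      exfalso
      have := hg02 b (Finset.mem_erase.2 ⟨hbt, hb⟩)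
      exact this (hab ▸ Finset.mem_insert_self t U)
    · rw [if_neg hat, if_pos hbt] at hab
      exfalso
      have := hg02 a (Finset.mem_erase.2 ⟨hat, ha⟩)
      exact this (hab.symm ▸ Finset.mem_insert_self t U)
    · rw [if_neg hat, if_neg hbt] at hab
      have := hg01 (Finset.mem_coe.2 (Finset.mem_erase.2 ⟨hat, ha⟩))
        (Finset.mem_coe.2 (Finset.mem_erase.2 ⟨hbt, hb⟩)) hab
      exact this
  refine assemble hG hreg hd hGood g ?_ ?_ ?_ ?_ ?_
  · -- H1
    intro a ha b hb hab
    simp only [Finset.mem_coe, hLv1, Finset.mem_union] at ha hb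
    by_cases hac : a ∈ childs G r xs <;> by_cases hbc : b ∈ childs G r xs
    · rw [hgch a hac, hgch b hbc] at hab
      exact hh0inj (Finset.mem_coe.2 hac) (Finset.mem_coe.2 hbc) hab
    · have hbP : b ∈ P.biUnion (childs G r) := by
        rcases hb with h | h
        · exact absurd h hbc
        · exact h
      rw [hgch a hac, hgP b hbP] at hab
      exfalso
      exact (hg1fresh b hbP).2 (hab ▸ Finset.mem_image.2 ⟨a, hac, rfl⟩)
    · have haP : a ∈ P.biUnion (childs G r) := by
        rcases ha with h | h
        · exact absurd h hac
        · exact h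
      rw [hgP a haP, hgch b hbc] at hab
      exfalso
      exact (hg1fresh a haP).2 (hab.symm ▸ Finset.mem_image.2 ⟨b, hbc, rfl⟩)
    · have haP : a ∈ P.biUnion (childs G r) := by
        rcases ha with h | h
        · exact absurd h hac
        · exact h
      have hbP : b ∈ P.biUnion (childs G r) := by
        rcases hb with h | h
        · exact absurd h hbc
        · exact h
      rw [hgP a haP, hgP b hbP] at hab
      exact hg11 (Finset.mem_coe.2 haP) (Finset.mem_coe.2 hbP) hab
  · -- H2
    intro v hv
    rw [hLv1, Finset.mem_union] at hv
    by_cases hvc : v ∈ childs G r xs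
    · rw [hgch v hvc]
      exact hh0fresh v hvc
    · have hvP : v ∈ P.biUnion (childs G r) := by
        rcases hv with h | h
        · exact absurd h hvc
        · exact h
      rw [hgP v hvP]
      exact (hg1fresh v hvP).1
  · -- H3
    intro p hp
    by_cases hpx : p = xs
    · rw [hpx]
      rw [Finset.sum_congr rfl (fun v hv => hgch v hv)]
      have hsplit : h0 tc + ∑ v ∈ (childs G r xs).erase tc, h0 v
          = ∑ v ∈ childs G r xs, h0 v := Finset.add_sum_erase _ h0 htc
      have h1 : h0 tc = t := by simp [hh0]
      have h2 : ∀ v ∈ (childs G r xs).erase tc, h0 v = g0 v := by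
        intro v hv
        simp only [hh0]
        rw [if_neg (Finset.mem_erase.1 hv).1]
      rw [← hsplit, h1, Finset.sum_congr rfl h2, hg03]
      ring
    · have hpP : p ∈ P := Finset.mem_erase.2 ⟨hpx, hp⟩
      have h2 : ∀ v ∈ childs G r p, g v = g1 v := by
        intro v hv
        exact hgP v (Finset.mem_biUnion.2 ⟨p, hpP, hv⟩)
      rw [Finset.sum_congr rfl h2]
      exact hg13 p hpP
  · -- H4
    refine ⟨tc, childs_subset_lvlF hxs htc, ?_⟩
    rw [hgch tc htc]
    simp [hh0]
    rw [ht, hU]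
  · -- H5
    intro h3
    exact absurd h3 hd4

end HLP

namespace HLP

variable {V : Type*} [DecidableEq V] {G : SimpleGraph V} [G.LocallyFinite]
variable {d : ℕ} {r : V}

lemma usedF_succ (hG : G.IsTree) {n : ℕ} (f g : V → ℤ) :
    usedF hG r (n + 1) (fun z => if G.dist r z ≤ n then f z else g z) =
      usedF hG r n f ∪ (lvlF hG r (n + 1)).image g := by
  rw [usedF, ballF_succ, Finset.image_union]
  congr 1
  · refine Finset.image_congr ?_
    intro x hx
    simp only [Finset.mem_coe, mem_ballF] at hx
    simp only [if_pos hx]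
  · refine Finset.image_congr ?_
    intro x hx
    simp only [Finset.mem_coe, mem_lvlF] at hx
    simp only []
    rw [if_neg (by omega)]

lemma good_step3_zero (hG : G.IsTree) (hreg : ∀ v, G.degree v = d) (hd3 : d = 3)
    {f : V → ℤ} (hGood : Good hG r d 0 f) :
    ∃ f', Good hG r d 1 f' ∧ ∀ x ∈ ballF hG r 0, f' x = f x := by
  classical
  subst hd3
  set U := usedF hG r 0 f with hU
  set t := enumZ (luk U) with ht
  have ht_notU : t ∉ U := enum_luk_not_mem U
  have hcc : (childs G r r).card = 3 := childs_card_root hG hreg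
  obtain ⟨tc, htc⟩ : (childs G r r).Nonempty := Finset.card_pos.1 (by omega)
  obtain ⟨c1, c2, hc12, hC2⟩ := Finset.card_eq_two.1
    (by rw [Finset.card_erase_of_mem htc, hcc] : ((childs G r r).erase tc).card = 2)
  have htc1 : tc ≠ c1 := by
    intro h
    have : c1 ∈ (childs G r r).erase tc := by rw [hC2]; simp
    exact (Finset.mem_erase.1 this).1 h.symm
  have htc2 : tc ≠ c2 := by
    intro h
    have : c2 ∈ (childs G r r).erase tc := by rw [hC2]; simp
    exact (Finset.mem_erase.1 this).1 h.symm
  have hc1m : c1 ∈ childs G r r := by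
    have : c1 ∈ (childs G r r).erase tc := by rw [hC2]; simp
    exact (Finset.mem_erase.1 this).2
  have hc2m : c2 ∈ childs G r r := by
    have : c2 ∈ (childs G r r).erase tc := by rw [hC2]; simp
    exact (Finset.mem_erase.1 this).2
  have hchset : childs G r r = {tc, c1, c2} := by
    rw [← Finset.insert_erase htc, hC2]
  set K' := luk (insert t U) with hK'
  set t' := enumZ K' with ht'
  have ht'_not : t' ∉ insert t U := enum_luk_not_mem _
  set SS := Sval G r 3 f r - t with hSS
  obtain ⟨v, hv1, hv2, hv3, hv4, hv5, hv6⟩ :=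
    exists_knob (insert t (insert t' U)) SS (f r) t' 3 le_rfl
  set g : V → ℤ := fun z => if z = tc then t else if z = c1 then v
    else if z = c2 then SS - v else 0 with hg
  have hgtc : g tc = t := by simp [hg]
  have hgc1 : g c1 = v := by
    simp [hg, Ne.symm htc1]
  have hgc2 : g c2 = SS - v := by
    simp [hg, Ne.symm htc2, Ne.symm hc12]
  have hlvl0 : lvlF hG r 0 = {r} := lvlF_zero
  have hlvl1 : lvlF hG r 1 = childs G r r := by
    rw [lvlF_succ_eq, hlvl0, Finset.singleton_biUnion]
  -- basic freshness facts
  have hvt : v ≠ t := by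
    intro h; exact hv1 (by rw [h]; exact Finset.mem_insert_self _ _)
  have hvt' : v ≠ t' := by
    intro h
    exact hv1 (by rw [h]; exact Finset.mem_insert_of_mem (Finset.mem_insert_self _ _))
  have hvU : v ∉ U := fun h => hv1 (Finset.mem_insert_of_mem (Finset.mem_insert_of_mem h))
  have hut : SS - v ≠ t := by
    intro h; exact hv2 (by rw [h]; exact Finset.mem_insert_self _ _)
  have hut' : SS - v ≠ t' := by
    intro h
    exact hv2 (by rw [h]; exact Finset.mem_insert_of_mem (Finset.mem_insert_self _ _))
  have huU : SS - v ∉ U := fun h => hv2 (Finset.mem_insert_of_mem (Finset.mem_insert_of_mem h))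
  refine assemble hG hreg (by omega) hGood g ?_ ?_ ?_ ?_ ?_
  · -- H1
    intro a ha b hb hab
    simp only [Finset.mem_coe, hlvl1, hchset, Finset.mem_insert, Finset.mem_singleton] at ha hb
    rcases ha with rfl | rfl | rfl <;> rcases hb with rfl | rfl | rfl
    · rfl
    · rw [hgtc, hgc1] at hab; exact (hvt hab.symm).elim
    · rw [hgtc, hgc2] at hab; exact (hut hab.symm).elim
    · rw [hgc1, hgtc] at hab; exact (hvt hab).elim
    · rfl
    · rw [hgc1, hgc2] at hab; exact (hv3 hab).elim
    · rw [hgc2, hgtc] at hab; exact (hut hab).elim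
    · rw [hgc2, hgc1] at hab; exact (hv3 hab.symm).elim
    · rfl
  · -- H2
    intro z hz
    rw [hlvl1, hchset] at hz
    simp only [Finset.mem_insert, Finset.mem_singleton] at hz
    rcases hz with rfl | rfl | rfl
    · rw [hgtc]; exact ht_notU
    · rw [hgc1]; exact hvU
    · rw [hgc2]; exact huU
  · -- H3
    intro p hp
    rw [hlvl0, Finset.mem_singleton] at hp
    subst hp
    rw [hchset]
    rw [Finset.sum_insert (by simp [htc1, htc2]), Finset.sum_pair hc12, hgtc, hgc1, hgc2, hSS]
    ring
  · -- H4
    exact ⟨tc, by rw [hlvl1]; exact htc, hgtc⟩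
  · -- H5
    intro _
    refine ⟨c1, by rw [hlvl1]; exact hc1m, ?_⟩
    have hpar : par G r c1 = r := par_of_mem_childs hG hc1m
    have himg : (lvlF hG r 1).image g = {t, v, SS - v} := by
      rw [hlvl1, hchset]
      rw [Finset.image_insert, Finset.image_insert, Finset.image_singleton, hgtc, hgc1, hgc2]
    have hused1 : usedF hG r 1 (fun z => if G.dist r z ≤ 0 then f z else g z) =
        U ∪ {t, v, SS - v} := by
      rw [usedF_succ hG f g, himg, hU]
    have hluk1 : luk (usedF hG r 1 (fun z => if G.dist r z ≤ 0 then f z else g z)) = K' := by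
      rw [hused1]
      refine luk_eq ?_ ?_
      · rw [← ht']
        intro hmem
        rcases Finset.mem_union.1 hmem with h | h
        · exact ht'_not (Finset.mem_insert_of_mem h)
        · simp only [Finset.mem_insert, Finset.mem_singleton] at h
          rcases h with h | h | h
          · exact ht'_not (h ▸ Finset.mem_insert_self _ _)
          · exact hvt' h.symm
          · exact hut' h.symm
      · intro j hj
        have := enum_mem_of_lt_luk (hK' ▸ hj)
        rcases Finset.mem_insert.1 this with h | h
        · exact Finset.mem_union_right _ (by simp [h])
        · exact Finset.mem_union_left _ h
    rw [hluk1, ← ht', hgc1, hused1]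
    have hfr : (fun z => if G.dist r z ≤ 0 then f z else g z) (par G r c1) = f r := by
      rw [hpar]
      simp [SimpleGraph.dist_self]
    rw [hfr]
    intro hmem
    have hfut : ((3:ℕ):ℤ) * v - f r - t' = 3 * v - f r - t' := by push_cast; ring
    rw [hfut] at hmem
    rcases Finset.mem_insert.1 hmem with h | h
    · exact hv4 (by rw [h]; exact Finset.mem_insert_of_mem (Finset.mem_insert_self _ _))
    · rcases Finset.mem_union.1 h with h' | h'
      · exact hv4 (Finset.mem_insert_of_mem (Finset.mem_insert_of_mem h'))
      · simp only [Finset.mem_insert, Finset.mem_singleton] at h'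
        rcases h' with h' | h' | h'
        · exact hv4 (by rw [h']; exact Finset.mem_insert_self _ _)
        · exact hv5 h'
        · exact hv6 h'

end HLP


open Finset SimpleGraph
set_option linter.unusedSectionVars false
set_option linter.unusedVariables false
set_option maxHeartbeats 2000000

namespace HLP

variable {V : Type*} [DecidableEq V] {G : SimpleGraph V} [G.LocallyFinite]
variable {d : ℕ} {r : V}

lemma good_step3_succ (hG : G.IsTree) (hreg : ∀ v, G.degree v = d) (hd3 : d = 3)
    {n : ℕ} (hn : 1 ≤ n) {f : V → ℤ} (hGood : Good hG r d n f) :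
    ∃ f', Good hG r d (n + 1) f' ∧ ∀ x ∈ ballF hG r n, f' x = f x := by
  classical
  subst hd3
  set U := usedF hG r n f with hU
  set t := enumZ (luk U) with ht
  have ht_notU : t ∉ U := enum_luk_not_mem U
  obtain ⟨xs, hxs_dist, hxs_des⟩ := hGood.des rfl hn
  have hxs_lvl : xs ∈ lvlF hG r n := mem_lvlF.2 hxs_dist
  have hxsr : xs ≠ r := by
    intro h
    rw [h, SimpleGraph.dist_self] at hxs_dist
    omega
  set c := ((3:ℕ):ℤ) * f xs - f (par G r xs) - t with hc
  have hc_not : c ∉ insert t U := hxs_des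
  have hct : c ≠ t := fun h => hc_not (h ▸ Finset.mem_insert_self _ _)
  have hcU : c ∉ U := fun h => hc_not (Finset.mem_insert_of_mem h)
  have hcard2xs : (childs G r xs).card = 2 := by
    have := childs_card hG hreg (r := r) hxsr; omega
  obtain ⟨tc, cc, htccc, hchxs⟩ := Finset.card_eq_two.1 hcard2xs
  have h2lvl : 1 < (lvlF hG r n).card := by
    have := two_le_lvlF_card hG hreg (by omega) r hn; omega
  obtain ⟨y, hy_lvl, hy_ne⟩ := Finset.exists_mem_ne h2lvl xs
  have hyr : y ≠ r := by
    intro h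
    have := mem_lvlF.1 hy_lvl
    rw [h, SimpleGraph.dist_self] at this
    omega
  have hcard2y : (childs G r y).card = 2 := by
    have := childs_card hG hreg (r := r) hyr; omega
  obtain ⟨yc1, yc2, hyc, hchy⟩ := Finset.card_eq_two.1 hcard2y
  set K' := luk (insert c (insert t U)) with hK'
  set t' := enumZ K' with ht'
  have ht'_not : t' ∉ insert c (insert t U) := enum_luk_not_mem _
  set P := ((lvlF hG r n).erase xs).erase y with hP
  have hyP : y ∈ (lvlF hG r n).erase xs := Finset.mem_erase.2 ⟨hy_ne, hy_lvl⟩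
  have hLvn : lvlF hG r n = insert xs (insert y P) := by
    rw [hP, Finset.insert_erase hyP, Finset.insert_erase hxs_lvl]
  have hPmem : ∀ p ∈ P, p ∈ lvlF hG r n ∧ p ≠ xs ∧ p ≠ y := by
    intro p hp
    have h1 := Finset.mem_erase.1 hp
    have h2 := Finset.mem_erase.1 h1.2
    exact ⟨h2.2, h2.1, h1.1⟩
  have hPcard : ∀ p ∈ P, 2 ≤ (childs G r p).card := by
    intro p hp
    have hpl := (hPmem p hp).1
    have hpr : p ≠ r := by
      intro h
      have := mem_lvlF.1 hpl
      rw [h, SimpleGraph.dist_self] at this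
      omega
    have := childs_card hG hreg (r := r) hpr
    omega
  set FS := insert t (insert c (insert t' U)) with hFS
  obtain ⟨g1, hg11, hg12, hg13, hg14⟩ :=
    exists_multi_assignment P (childs G r)
      (fun p _ q _ hpq => childs_disjoint hG hpq) hPcard (Sval G r 3 f) FS
  set FK := FS ∪ (P.biUnion (childs G r)).image g1 with hFK
  obtain ⟨v, hv1, hv2, hv3, hv4, hv5, hv6⟩ :=
    exists_knob FK (Sval G r 3 f y) (f y) t' 3 le_rfl
  set u := Sval G r 3 f y - v with hu
  set g : V → ℤ := fun z => if z = tc then t else if z = cc then c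
    else if z = yc1 then v else if z = yc2 then u else g1 z with hg
  -- distinctness of the special vertices
  have hdisj_xy : Disjoint (childs G r xs) (childs G r y) := childs_disjoint hG hy_ne.symm
  have htc_m : tc ∈ childs G r xs := by rw [hchxs]; simp
  have hcc_m : cc ∈ childs G r xs := by rw [hchxs]; simp
  have hyc1_m : yc1 ∈ childs G r y := by rw [hchy]; simp
  have hyc2_m : yc2 ∈ childs G r y := by rw [hchy]; simp
  have hne_xy : ∀ a ∈ childs G r xs, ∀ b ∈ childs G r y, a ≠ b := by
    intro a ha b hb h
    exact hdisj_xy.forall_ne_finset ha hb h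
  have htcyc1 : tc ≠ yc1 := hne_xy tc htc_m yc1 hyc1_m
  have htcyc2 : tc ≠ yc2 := hne_xy tc htc_m yc2 hyc2_m
  have hccyc1 : cc ≠ yc1 := hne_xy cc hcc_m yc1 hyc1_m
  have hccyc2 : cc ≠ yc2 := hne_xy cc hcc_m yc2 hyc2_m
  have hPnot : ∀ z ∈ P.biUnion (childs G r), z ≠ tc ∧ z ≠ cc ∧ z ≠ yc1 ∧ z ≠ yc2 := by
    intro z hz
    obtain ⟨p, hp, hzp⟩ := Finset.mem_biUnion.1 hz
    have hpx := (hPmem p hp).2.1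
    have hpy := (hPmem p hp).2.2
    have hzx : ∀ w ∈ childs G r xs, z ≠ w := fun w hw h =>
      (childs_disjoint hG hpx (r := r)).forall_ne_finset hzp (h ▸ hw) rfl
    have hzy : ∀ w ∈ childs G r y, z ≠ w := fun w hw h =>
      (childs_disjoint hG hpy (r := r)).forall_ne_finset hzp (h ▸ hw) rfl
    exact ⟨hzx tc htc_m, hzx cc hcc_m, hzy yc1 hyc1_m, hzy yc2 hyc2_m⟩
  -- values of g
  have hgtc : g tc = t := by simp [hg]
  have hgcc : g cc = c := by simp [hg, Ne.symm htccc]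
  have hgy1 : g yc1 = v := by simp [hg, Ne.symm htcyc1, Ne.symm hccyc1]
  have hgy2 : g yc2 = u := by simp [hg, Ne.symm htcyc2, Ne.symm hccyc2, Ne.symm hyc]
  have hgP : ∀ z ∈ P.biUnion (childs G r), g z = g1 z := by
    intro z hz
    obtain ⟨h1, h2, h3, h4⟩ := hPnot z hz
    simp [hg, h1, h2, h3, h4]
  -- freshness facts
  have hvF : ∀ z, z ∈ FK → v ≠ z := fun z hz h => hv1 (h ▸ hz)
  have huF : ∀ z, z ∈ FK → u ≠ z := fun z hz h => hv2 (h ▸ hz)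
  have htFS : t ∈ FS := Finset.mem_insert_self _ _
  have hcFS : c ∈ FS := Finset.mem_insert_of_mem (Finset.mem_insert_self _ _)
  have ht'FS : t' ∈ FS :=
    Finset.mem_insert_of_mem (Finset.mem_insert_of_mem (Finset.mem_insert_self _ _))
  have hUFS : ∀ z ∈ U, z ∈ FS := fun z hz =>
    Finset.mem_insert_of_mem (Finset.mem_insert_of_mem (Finset.mem_insert_of_mem hz))
  have hg1FS : ∀ z ∈ P.biUnion (childs G r), g1 z ∉ FS := hg12
  have hg1img : ∀ z ∈ P.biUnion (childs G r), g1 z ∈ FK :=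
    fun z hz => Finset.mem_union_right _ (Finset.mem_image.2 ⟨z, hz, rfl⟩)
  have hvt : v ≠ t := hvF t (Finset.mem_union_left _ htFS)
  have hvc : v ≠ c := hvF c (Finset.mem_union_left _ hcFS)
  have hvt' : v ≠ t' := hvF t' (Finset.mem_union_left _ ht'FS)
  have hvU : v ∉ U := fun h => hvF v (Finset.mem_union_left _ (hUFS v h)) rfl
  have hut : u ≠ t := huF t (Finset.mem_union_left _ htFS)
  have huc : u ≠ c := huF c (Finset.mem_union_left _ hcFS)
  have hut' : u ≠ t' := huF t' (Finset.mem_union_left _ ht'FS)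
  have huU : u ∉ U := fun h => huF u (Finset.mem_union_left _ (hUFS u h)) rfl
  have hvu : v ≠ u := hv3
  have hvg1 : ∀ z ∈ P.biUnion (childs G r), v ≠ g1 z := fun z hz => hvF _ (hg1img z hz)
  have hug1 : ∀ z ∈ P.biUnion (childs G r), u ≠ g1 z := fun z hz => huF _ (hg1img z hz)
  have hg1t : ∀ z ∈ P.biUnion (childs G r), g1 z ≠ t := fun z hz h => hg1FS z hz (h ▸ htFS)
  have hg1c : ∀ z ∈ P.biUnion (childs G r), g1 z ≠ c := fun z hz h => hg1FS z hz (h ▸ hcFS)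
  have hg1t' : ∀ z ∈ P.biUnion (childs G r), g1 z ≠ t' := fun z hz h => hg1FS z hz (h ▸ ht'FS)
  have hg1U : ∀ z ∈ P.biUnion (childs G r), g1 z ∉ U := fun z hz h => hg1FS z hz (hUFS _ h)
  -- decomposition of the new level
  have hLv1 : lvlF hG r (n + 1) =
      childs G r xs ∪ (childs G r y ∪ P.biUnion (childs G r)) := by
    rw [lvlF_succ_eq, hLvn, Finset.biUnion_insert, Finset.biUnion_insert]
  have hmem5 : ∀ z ∈ lvlF hG r (n + 1),
      z = tc ∨ z = cc ∨ z = yc1 ∨ z = yc2 ∨ z ∈ P.biUnion (childs G r) := by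
    intro z hz
    rw [hLv1] at hz
    rcases Finset.mem_union.1 hz with h | h
    · rw [hchxs] at h
      simp only [Finset.mem_insert, Finset.mem_singleton] at h
      tauto
    · rcases Finset.mem_union.1 h with h' | h'
      · rw [hchy] at h'
        simp only [Finset.mem_insert, Finset.mem_singleton] at h'
        tauto
      · tauto
  have hval : ∀ z ∈ lvlF hG r (n + 1),
      (z = tc ∧ g z = t) ∨ (z = cc ∧ g z = c) ∨ (z = yc1 ∧ g z = v) ∨
      (z = yc2 ∧ g z = u) ∨ (z ∈ P.biUnion (childs G r) ∧ g z = g1 z) := by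
    intro z hz
    rcases hmem5 z hz with rfl | rfl | rfl | rfl | h
    · exact Or.inl ⟨rfl, hgtc⟩
    · exact Or.inr (Or.inl ⟨rfl, hgcc⟩)
    · exact Or.inr (Or.inr (Or.inl ⟨rfl, hgy1⟩))
    · exact Or.inr (Or.inr (Or.inr (Or.inl ⟨rfl, hgy2⟩)))
    · exact Or.inr (Or.inr (Or.inr (Or.inr ⟨h, hgP z h⟩)))
  refine assemble hG hreg (by omega) hGood g ?_ ?_ ?_ ?_ ?_
  · -- H1 : injectivity on the new level
    intro a ha b hb hab
    rcases hval a (Finset.mem_coe.1 ha) with ⟨rfl, hva⟩ | ⟨rfl, hva⟩ | ⟨rfl, hva⟩ |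
        ⟨rfl, hva⟩ | ⟨haP, hva⟩ <;>
      rcases hval b (Finset.mem_coe.1 hb) with ⟨rfl, hvb⟩ | ⟨rfl, hvb⟩ | ⟨rfl, hvb⟩ |
        ⟨rfl, hvb⟩ | ⟨hbP, hvb⟩
    · rfl
    · rw [hva, hvb] at hab; exact (hct hab.symm).elim
    · rw [hva, hvb] at hab; exact (hvt hab.symm).elim
    · rw [hva, hvb] at hab; exact (hut hab.symm).elim
    · rw [hva, hvb] at hab; exact (hg1t b hbP hab.symm).elim
    · rw [hva, hvb] at hab; exact (hct hab).elim
    · rfl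
    · rw [hva, hvb] at hab; exact (hvc hab.symm).elim
    · rw [hva, hvb] at hab; exact (huc hab.symm).elim
    · rw [hva, hvb] at hab; exact (hg1c b hbP hab.symm).elim
    · rw [hva, hvb] at hab; exact (hvt hab).elim
    · rw [hva, hvb] at hab; exact (hvc hab).elim
    · rfl
    · rw [hva, hvb] at hab; exact (hvu hab).elim
    · rw [hva, hvb] at hab; exact (hvg1 b hbP hab).elim
    · rw [hva, hvb] at hab; exact (hut hab).elim
    · rw [hva, hvb] at hab; exact (huc hab).elim
    · rw [hva, hvb] at hab; exact (hvu hab.symm).elim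
    · rfl
    · rw [hva, hvb] at hab; exact (hug1 b hbP hab).elim
    · rw [hva, hvb] at hab; exact (hg1t a haP hab).elim
    · rw [hva, hvb] at hab; exact (hg1c a haP hab).elim
    · rw [hva, hvb] at hab; exact (hvg1 a haP hab.symm).elim
    · rw [hva, hvb] at hab; exact (hug1 a haP hab.symm).elim
    · rw [hva, hvb] at hab; exact hg11 (Finset.mem_coe.2 haP) (Finset.mem_coe.2 hbP) hab
  · -- H2 : freshness
    intro z hz
    rcases hval z hz with ⟨rfl, hvz⟩ | ⟨rfl, hvz⟩ | ⟨rfl, hvz⟩ | ⟨rfl, hvz⟩ | ⟨hzP, hvz⟩ <;>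
      rw [hvz]
    · exact ht_notU
    · exact hcU
    · exact hvU
    · exact huU
    · exact hg1U z hzP
  · -- H3 : sums
    intro p hp
    rw [hLvn] at hp
    rcases Finset.mem_insert.1 hp with rfl | hp'
    · rw [hchxs, Finset.sum_pair htccc, hgtc, hgcc, hc, Sval, if_neg hxsr]
      push_cast
      ring
    · rcases Finset.mem_insert.1 hp' with rfl | hpP
      · rw [hchy, Finset.sum_pair hyc, hgy1, hgy2, hu]
        ring
      · have h2 : ∀ z ∈ childs G r p, g z = g1 z := by
          intro z hz
          exact hgP z (Finset.mem_biUnion.2 ⟨p, hpP, hz⟩)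
        rw [Finset.sum_congr rfl h2]
        exact hg13 p hpP
  · -- H4 : the next integer is hit
    refine ⟨tc, ?_, hgtc⟩
    rw [hLv1]
    exact Finset.mem_union_left _ htc_m
  · -- H5 : designated vertex for the next stage
    intro _
    have hyc1_lvl : yc1 ∈ lvlF hG r (n + 1) := by
      rw [hLv1]
      exact Finset.mem_union_right _ (Finset.mem_union_left _ hyc1_m)
    refine ⟨yc1, hyc1_lvl, ?_⟩
    have hpar : par G r yc1 = y := par_of_mem_childs hG hyc1_m
    have hdy : G.dist r y = n := mem_lvlF.1 hy_lvl
    have hfy : (fun z => if G.dist r z ≤ n then f z else g z) (par G r yc1) = f y := by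
      rw [hpar]
      simp [hdy]
    -- the new used set
    have husedsub : ∀ z ∈ usedF hG r (n + 1) (fun w => if G.dist r w ≤ n then f w else g w),
        z ∈ U ∨ z = t ∨ z = c ∨ z = v ∨ z = u ∨
          ∃ w ∈ P.biUnion (childs G r), z = g1 w := by
      intro z hz
      rw [usedF_succ hG f g] at hz
      rcases Finset.mem_union.1 hz with h | h
      · exact Or.inl h
      · obtain ⟨w, hw, hwz⟩ := Finset.mem_image.1 h
        rcases hval w hw with ⟨rfl, hvw⟩ | ⟨rfl, hvw⟩ | ⟨rfl, hvw⟩ | ⟨rfl, hvw⟩ | ⟨hwP, hvw⟩ <;>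
          rw [hvw] at hwz
        · exact Or.inr (Or.inl hwz.symm)
        · exact Or.inr (Or.inr (Or.inl hwz.symm))
        · exact Or.inr (Or.inr (Or.inr (Or.inl hwz.symm)))
        · exact Or.inr (Or.inr (Or.inr (Or.inr (Or.inl hwz.symm))))
        · exact Or.inr (Or.inr (Or.inr (Or.inr (Or.inr ⟨w, hwP, hwz.symm⟩))))
    have husedin : ∀ z, z ∈ U ∨ z = t ∨ z = c →
        z ∈ usedF hG r (n + 1) (fun w => if G.dist r w ≤ n then f w else g w) := by
      intro z hz
      rw [usedF_succ hG f g]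
      rcases hz with h | h | h
      · exact Finset.mem_union_left _ h
      · refine Finset.mem_union_right _ (Finset.mem_image.2 ⟨tc, ?_, h ▸ hgtc⟩)
        rw [hLv1]; exact Finset.mem_union_left _ htc_m
      · refine Finset.mem_union_right _ (Finset.mem_image.2 ⟨cc, ?_, h ▸ hgcc⟩)
        rw [hLv1]; exact Finset.mem_union_left _ hcc_m
    have hluk1 : luk (usedF hG r (n + 1) (fun w => if G.dist r w ≤ n then f w else g w))
        = K' := by
      refine luk_eq ?_ ?_
      · rw [← ht']
        intro hmem
        rcases husedsub _ hmem with h | h | h | h | h | ⟨w, hw, hwz⟩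
        · exact ht'_not (Finset.mem_insert_of_mem (Finset.mem_insert_of_mem h))
        · exact ht'_not (by rw [h]; exact Finset.mem_insert_of_mem (Finset.mem_insert_self _ _))
        · exact ht'_not (by rw [h]; exact Finset.mem_insert_self _ _)
        · exact hvt' h.symm
        · exact hut' h.symm
        · exact hg1t' w hw (by rw [← hwz])
      · intro j hj
        have := enum_mem_of_lt_luk (hK' ▸ hj)
        rcases Finset.mem_insert.1 this with h | h
        · exact husedin _ (Or.inr (Or.inr h))
        · rcases Finset.mem_insert.1 h with h' | h'
          · exact husedin _ (Or.inr (Or.inl h'))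
          · exact husedin _ (Or.inl h')
    rw [hluk1, ← ht', hgy1, hfy]
    intro hmem
    have hfut : ((3:ℕ):ℤ) * v - f y - t' = 3 * v - f y - t' := by push_cast; ring
    rw [hfut] at hmem
    have hfutFK : ∀ z, (3 : ℤ) * v - f y - t' = z → z ∈ FK → False := fun z hz hzF =>
      hv4 (hz ▸ hzF)
    rcases Finset.mem_insert.1 hmem with h | h
    · exact hfutFK t' h (Finset.mem_union_left _ ht'FS)
    · rcases husedsub _ h with h' | h' | h' | h' | h' | ⟨w, hw, hwz⟩
      · exact hv4 (Finset.mem_union_left _ (hUFS _ h'))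
      · exact hfutFK t h' (Finset.mem_union_left _ htFS)
      · exact hfutFK c h' (Finset.mem_union_left _ hcFS)
      · exact hv5 h'
      · exact hv6 h'
      · exact hfutFK _ hwz (hg1img w hw)

end HLP


open Finset SimpleGraph
set_option linter.unusedSectionVars false
set_option linter.unusedVariables false
set_option maxHeartbeats 1000000

namespace HLP

variable {V : Type*} [DecidableEq V] {G : SimpleGraph V} [G.LocallyFinite]
variable {d : ℕ} {r : V}

lemma good_step (hG : G.IsTree) (hreg : ∀ v, G.degree v = d) (hd : 3 ≤ d)
    {n : ℕ} {f : V → ℤ} (hGood : Good hG r d n f) :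
    ∃ f', Good hG r d (n + 1) f' ∧ ∀ x ∈ ballF hG r n, f' x = f x := by
  by_cases hd3 : d = 3
  · rcases Nat.eq_zero_or_pos n with rfl | hn
    · exact good_step3_zero hG hreg hd3 hGood
    · exact good_step3_succ hG hreg hd3 hn hGood
  · exact good_step_ge4 hG hreg hd hd3 hGood

/-- The sequence of partial labelings. -/
noncomputable def seqF (hG : G.IsTree) (hreg : ∀ v, G.degree v = d) (hd : 3 ≤ d) (r : V) :
    (n : ℕ) → {f : V → ℤ // Good hG r d n f}
  | 0 => ⟨fun _ => 0, good_zero hG⟩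
  | n + 1 => ⟨(good_step hG hreg hd (seqF hG hreg hd r n).2).choose,
      ((good_step hG hreg hd (seqF hG hreg hd r n).2).choose_spec).1⟩

lemma seqF_succ_agree (hG : G.IsTree) (hreg : ∀ v, G.degree v = d) (hd : 3 ≤ d) (r : V)
    (n : ℕ) : ∀ x, G.dist r x ≤ n →
      (seqF hG hreg hd r (n + 1)).1 x = (seqF hG hreg hd r n).1 x := by
  intro x hx
  exact ((good_step hG hreg hd (seqF hG hreg hd r n).2).choose_spec).2 x (mem_ballF.2 hx)

lemma seqF_agree (hG : G.IsTree) (hreg : ∀ v, G.degree v = d) (hd : 3 ≤ d) (r : V)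
    {m n : ℕ} (hmn : m ≤ n) : ∀ x, G.dist r x ≤ m →
      (seqF hG hreg hd r n).1 x = (seqF hG hreg hd r m).1 x := by
  induction n with
  | zero =>
      intro x hx
      have : m = 0 := by omega
      rw [this]
  | succ n ih =>
      intro x hx
      rcases Nat.lt_or_ge m (n + 1) with h | h
      · have h1 := seqF_succ_agree hG hreg hd r n x (by omega)
        rw [h1]
        exact ih (by omega) x hx
      · have : m = n + 1 := by omega
        rw [this]

theorem main_harmonic (hG : G.IsTree) (hreg : ∀ v, G.degree v = d) (hd : 3 ≤ d) (r : V) :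
    ∃ φ : V → ℤ,
      (∀ x : V, (G.degree x : ℤ) * φ x = ∑ y ∈ G.neighborFinset x, φ y) ∧
      Function.Bijective φ := by
  classical
  set φ : V → ℤ := fun x => (seqF hG hreg hd r (G.dist r x)).1 x with hφ
  have hφ_eq : ∀ (n : ℕ) (x : V), G.dist r x ≤ n → φ x = (seqF hG hreg hd r n).1 x := by
    intro n x hx
    simp only [hφ]
    exact (seqF_agree hG hreg hd r hx x le_rfl).symm
  refine ⟨φ, ?_, ?_, ?_⟩
  · -- harmonicity
    intro x
    set n := G.dist r x with hn
    have hGood := (seqF hG hreg hd r (n + 1)).2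
    have hharm := hGood.harm x (by omega)
    have hx : φ x = (seqF hG hreg hd r (n + 1)).1 x := hφ_eq (n + 1) x (by omega)
    have hnb : ∀ y ∈ G.neighborFinset x, φ y = (seqF hG hreg hd r (n + 1)).1 y := by
      intro y hy
      have hadj : G.Adj x y := by simpa using hy
      rcases adj_dist_cases hG r hadj with h' | h'
      · exact hφ_eq (n + 1) y (by omega)
      · exact hφ_eq (n + 1) y (by omega)
    rw [hreg x, hx, Finset.sum_congr rfl hnb]
    exact hharm
  · -- injectivity
    intro x y hxy
    set N := max (G.dist r x) (G.dist r y) with hN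
    have hx : φ x = (seqF hG hreg hd r N).1 x := hφ_eq N x (le_max_left _ _)
    have hy : φ y = (seqF hG hreg hd r N).1 y := hφ_eq N y (le_max_right _ _)
    rw [hx, hy] at hxy
    exact (seqF hG hreg hd r N).2.inj
      (Finset.mem_coe.2 (mem_ballF.2 (le_max_left _ _)))
      (Finset.mem_coe.2 (mem_ballF.2 (le_max_right _ _))) hxy
  · -- surjectivity
    intro z
    obtain ⟨k, hk⟩ := enumZ_surjective z
    have hGood := (seqF hG hreg hd r (k + 1)).2
    have := hGood.hits k (by omega)
    rw [usedF] at this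
    obtain ⟨w, hw, hwz⟩ := Finset.mem_image.1 this
    refine ⟨w, ?_⟩
    rw [hφ_eq (k + 1) w (mem_ballF.1 hw), hwz, hk]

end HLP


/-- For every `d ≥ 3`, the `d`-regular infinite tree admits a harmonic
labeling: for any connected acyclic graph in which every vertex has degree
`d`, there is a harmonic bijection onto `ℤ`. -/
theorem regular_tree_has_harmonic_labeling (d : ℕ) (hd : 3 ≤ d)
    {V : Type*} (G : SimpleGraph V) [G.LocallyFinite]
    (htree : G.IsTree) (hreg : ∀ v : V, G.degree v = d) :
    ∃ φ : V → ℤ,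
      (∀ x : V, (G.degree x : ℤ) * φ x = ∑ y ∈ G.neighborFinset x, φ y) ∧
      Function.Bijective φ := by
  classical
  obtain ⟨r⟩ := htree.isConnected.nonempty
  exact HLP.main_harmonic htree hreg hd r
end

section
/- The ladder graph Z × Z_2 admits no harmonic labeling. -/
private lemma three_pow_ge (k : ℕ) : 2 * k + 1 ≤ 3 ^ k := by
  induction k with
  | zero => simp
  | succ n ih =>
    have h3 : 1 ≤ 3 ^ n := Nat.one_le_pow _ _ (by norm_num)
    have : 3 ^ (n+1) = 3 * 3 ^ n := by ring
    omega

private lemma sq_lt_three_pow (k : ℕ) : k * k < 3 ^ k := by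
  induction k with
  | zero => simp
  | succ n ih =>
    have h1 := three_pow_ge n
    have : 3 ^ (n+1) = 3 * 3 ^ n := by ring
    nlinarith

private lemma lin_lt_three_pow (a b k : ℕ) (h : a + b ≤ k) : a + b * k < 3 ^ k := by
  rcases Nat.eq_zero_or_pos k with hk | hk
  · subst hk; omega
  · have h1 : a + b * k ≤ (a + b) * k := by nlinarith
    have h2 : (a + b) * k ≤ k * k := Nat.mul_le_mul_right _ h
    have h3 := sq_lt_three_pow k
    omega

private lemma pow_mul_le (k j : ℕ) (h : 2 * k ≤ j) : (j + 1) * 3 ^ k ≤ 3 ^ j := by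
  have hkj : k ≤ j := by omega
  have he : 3 ^ j = 3 ^ (j - k) * 3 ^ k := by
    rw [← pow_add]; congr 1; omega
  rw [he]
  apply Nat.mul_le_mul_right
  have := three_pow_ge (j - k)
  omega

private lemma growth (g : ℤ → ℤ) (hrec : ∀ m : ℤ, g (m+1) + g (m-1) = 4 * g m)
    (hne : ∀ m : ℤ, g m ≠ 0) :
    ∃ i : ℤ, ∀ m : ℤ, i ≤ m → (3:ℤ) ^ (m - i).toNat ≤ |g m| := by
  have hex : ∃ k : ℕ, (g k).natAbs ≤ (g ((k:ℤ)+1)).natAbs := by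
    by_contra hcon
    push_neg at hcon
    have hdesc : ∀ n : ℕ, (g n).natAbs + n ≤ (g 0).natAbs := by
      intro n
      induction n with
      | zero => simp
      | succ n ih =>
        have h1 := hcon n
        have h2 : ((n+1 : ℕ) : ℤ) = (n:ℤ) + 1 := by push_cast; ring
        rw [h2]
        omega
    have := hdesc ((g 0).natAbs + 1)
    omega
  obtain ⟨k, hk⟩ := hex
  set i : ℤ := (k:ℤ) + 1 with hi
  have hbase : |g (i - 1)| ≤ |g i| := by
    have e : i - 1 = (k:ℤ) := by rw [hi]; ring
    rw [e, Int.abs_eq_natAbs, Int.abs_eq_natAbs]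
    exact_mod_cast hk
  have key : ∀ m : ℤ, i ≤ m → |g (m-1)| ≤ |g m| ∧ (3:ℤ) ^ (m - i).toNat ≤ |g m| := by
    refine Int.le_induction ?_ ?_
    · refine ⟨hbase, ?_⟩
      have e : (i - i).toNat = 0 := by omega
      rw [e, pow_zero]
      exact Int.one_le_abs (hne i)
    · intro m hm ih
      obtain ⟨ih1, ih2⟩ := ih
      have hg : g (m+1) = 4 * g m - g (m-1) := by have := hrec m; linarith
      have h4 : |4 * g m| - |g (m-1)| ≤ |g (m+1)| := by
        rw [hg]; exact abs_sub_abs_le_abs_sub _ _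
      have habs4 : |4 * g m| = 4 * |g m| := by
        rw [abs_mul]; norm_num
      have h3 : 3 * |g m| ≤ |g (m+1)| := by linarith
      have h0 : 0 ≤ |g m| := abs_nonneg _
      constructor
      · have e : m + 1 - 1 = m := by ring
        rw [e]; linarith
      · have ht : (m + 1 - i).toNat = (m - i).toNat + 1 := by omega
        rw [ht, pow_succ]
        have := mul_le_mul_of_nonneg_right ih2 (by norm_num : (0:ℤ) ≤ 3)
        linarith
  exact ⟨i, fun m hm => (key m hm).2⟩
/-- The ladder graph `ℤ × ℤ₂` admits no harmonic labeling.  Vertices are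
pairs `(i, s)` with `i : ℤ`, `s : Bool`; each vertex `(i,s)` has the three
neighbors `(i+1,s)`, `(i-1,s)`, `(i,¬s)`. -/
theorem no_harmonic_labeling_of_ladder :
    ¬ ∃ φ : ℤ × Bool → ℤ,
      (∀ (i : ℤ) (s : Bool),
        3 * φ (i, s) = φ (i + 1, s) + φ (i - 1, s) + φ (i, !s)) ∧
      Function.Bijective φ := by
  rintro ⟨φ, hh, hinj, hsurj⟩
  set s : ℤ → ℤ := fun m => φ (m, false) + φ (m, true) with s_def
  set d : ℤ → ℤ := fun m => φ (m, false) - φ (m, true) with d_def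
  have hhf : ∀ m : ℤ, 3 * φ (m, false) = φ (m+1, false) + φ (m-1, false) + φ (m, true) := by
    intro m; have := hh m false; simpa using this
  have hht : ∀ m : ℤ, 3 * φ (m, true) = φ (m+1, true) + φ (m-1, true) + φ (m, false) := by
    intro m; have := hh m true; simpa using this
  have hs : ∀ m : ℤ, s (m+1) + s (m-1) = 2 * s m := by
    intro m
    simp only [s_def]
    have h1 := hhf m
    have h2 := hht m
    linarith
  have hd : ∀ m : ℤ, d (m+1) + d (m-1) = 4 * d m := by
    intro m
    simp only [d_def]
    have h1 := hhf m
    have h2 := hht m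
    linarith
  have hdne : ∀ m : ℤ, d m ≠ 0 := by
    intro m h
    rw [d_def] at h
    have he : φ (m, false) = φ (m, true) := by
      simpa [sub_eq_zero] using h
    have := hinj he
    simp at this
  -- s is arithmetic
  have hstep : ∀ m : ℤ, s (m+1) - s m = s 1 - s 0 := by
    intro m
    induction m using Int.induction_on with
    | zero => norm_num
    | succ n ih =>
      have h := hs ((n:ℤ)+1)
      have e : (n:ℤ) + 1 - 1 = (n:ℤ) := by ring
      rw [e] at h
      linarith
    | pred n ih =>
      have h := hs (-(n:ℤ))
      have e : -(n:ℤ) - 1 + 1 = -(n:ℤ) := by ring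
      rw [e]
      linarith
  have hsarith : ∀ m : ℤ, s m = s 0 + m * (s 1 - s 0) := by
    intro m
    induction m using Int.induction_on with
    | zero => ring
    | succ n ih =>
      have h := hstep (n:ℤ)
      linear_combination h + ih
    | pred n ih =>
      have h := hstep (-(n:ℤ)-1)
      have e : -(n:ℤ) - 1 + 1 = -(n:ℤ) := by ring
      rw [e] at h
      linear_combination ih - h
  have hsbound : ∀ m : ℤ, |s m| ≤ |s 0| + |s 1 - s 0| * |m| := by
    intro m
    rw [hsarith m]
    calc |s 0 + m * (s 1 - s 0)| ≤ |s 0| + |m * (s 1 - s 0)| := abs_add_le _ _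
    _ = |s 0| + |s 1 - s 0| * |m| := by rw [abs_mul, mul_comm]
  obtain ⟨i₁, hg1⟩ := growth d hd hdne
  have hd' : ∀ m : ℤ, (fun m => d (-m)) (m+1) + (fun m => d (-m)) (m-1)
      = 4 * (fun m => d (-m)) m := by
    intro m
    simp only
    have h := hd (-m)
    have e1 : -(m+1) = -m - 1 := by ring
    have e2 : -(m-1) = -m + 1 := by ring
    rw [e1, e2]
    linarith
  obtain ⟨i₂, hg2⟩ := growth (fun m => d (-m)) hd' (fun m => hdne (-m))
  -- constants
  set c1 : ℤ := |s 0| with c1_def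
  set c2 : ℤ := |s 1 - s 0| with c2_def
  have hc1 : 0 ≤ c1 := abs_nonneg _
  have hc2 : 0 ≤ c2 := abs_nonneg _
  set E : ℤ := max (max (max (3*(c1 + c2*|i₁| + c2)) (3*(c1 + c2*|i₂| + c2))) (i₁+i₂)) 0
    with E_def
  have hE0 : 0 ≤ E := le_max_right _ _
  have hE1 : 3*(c1 + c2*|i₁| + c2) ≤ E :=
    le_trans (le_trans (le_max_left _ _) (le_max_left _ _)) (le_max_left _ _)
  have hE2 : 3*(c1 + c2*|i₂| + c2) ≤ E :=
    le_trans (le_trans (le_max_right _ _) (le_max_left _ _)) (le_max_left _ _)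
  have hE3 : i₁ + i₂ ≤ E := le_trans (le_max_right _ _) (le_max_left _ _)
  clear_value E
  set k : ℕ := E.toNat + 4 with k_def
  set N : ℤ := (3:ℤ)^k with N_def
  have hN1 : 1 ≤ N := one_le_pow₀ (by norm_num)
  have hEk : E + 4 * (k:ℤ) < N := by
    have h := lin_lt_three_pow E.toNat 4 k (by omega)
    have hcast : ((3:ℕ)^k : ℤ) = N := by rw [N_def]; push_cast; ring
    have : (E.toNat : ℤ) + 4 * (k:ℤ) < N := by
      rw [← hcast]; exact_mod_cast h
    linarith [Int.toNat_of_nonneg hE0]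
  have hk4 : 4 ≤ (k:ℤ) := by omega
  -- key arithmetic estimate
  have harith : ∀ (A : ℤ) (j : ℕ), 0 ≤ A → 3*(c1 + c2*A + c2) ≤ E → 2*k ≤ j →
      2*N + c1 + c2 * (A + (j:ℤ)) < ((j:ℤ)+1) * N := by
    intro A j hA hAE hj
    have hjZ : (8:ℤ) ≤ (j:ℤ) := by omega
    have hC : 3*(c1 + c2*A + c2) < N := by linarith [hk4]
    have h1 : c1 + c2 * (A + (j:ℤ)) ≤ (c1 + c2*A + c2) * ((j:ℤ)+1) := by
      nlinarith [mul_nonneg hc1 (by linarith : (0:ℤ) ≤ (j:ℤ)),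
        mul_nonneg (mul_nonneg hc2 hA) (by linarith : (0:ℤ) ≤ (j:ℤ))]
    nlinarith
  -- small values only in a window
  have main : ∀ (m : ℤ) (u : Bool), |φ (m, u)| ≤ N →
      -(i₂ + 2*(k:ℤ)) < m ∧ m < i₁ + 2*(k:ℤ) := by
    intro m u hmu
    have hdm : |d m| ≤ 2*N + |s m| := by
      have habs : |φ (m, u)| ≤ N := hmu
      cases u with
      | false =>
        have he : d m = 2 * φ (m, false) - s m := by
          simp only [d_def, s_def]; ring
        rw [he]
        calc |2 * φ (m, false) - s m| ≤ |2 * φ (m, false)| + |s m| := abs_sub _ _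
        _ = 2 * |φ (m, false)| + |s m| := by rw [abs_mul]; norm_num
        _ ≤ 2*N + |s m| := by linarith
      | true =>
        have he : d m = s m - 2 * φ (m, true) := by
          simp only [d_def, s_def]; ring
        rw [he]
        calc |s m - 2 * φ (m, true)| ≤ |s m| + |2 * φ (m, true)| := abs_sub _ _
        _ = |s m| + 2 * |φ (m, true)| := by rw [abs_mul]; norm_num
        _ ≤ 2*N + |s m| := by linarith
    have hsm := hsbound m
    constructor
    · by_contra hcon
      push_neg at hcon
      have hm2 : i₂ + 2*(k:ℤ) ≤ -m := by linarith
      have hgm := hg2 (-m) (by linarith)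
      simp only [neg_neg] at hgm
      set j : ℕ := (-m - i₂).toNat with j_def
      have hjk : 2*k ≤ j := by omega
      have hjm : -m = i₂ + (j:ℤ) := by omega
      have habsm : |m| ≤ |i₂| + (j:ℤ) := by
        have : |m| = |(-m)| := (abs_neg m).symm
        rw [this, hjm]
        calc |i₂ + (j:ℤ)| ≤ |i₂| + |(j:ℤ)| := abs_add_le _ _
        _ = |i₂| + (j:ℤ) := by rw [Int.abs_natCast]
      have hpm : ((j:ℤ)+1) * N ≤ (3:ℤ)^j := by
        have h := pow_mul_le k j hjk
        have : (((j+1) * 3^k : ℕ) : ℤ) ≤ ((3^j : ℕ) : ℤ) := by exact_mod_cast h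
        push_cast at this
        rw [N_def]
        linarith
      have hchain : |d m| ≤ 2*N + c1 + c2 * (|i₂| + (j:ℤ)) := by
        have : c2 * |m| ≤ c2 * (|i₂| + (j:ℤ)) := by
          apply mul_le_mul_of_nonneg_left habsm hc2
        linarith
      have hfin := harith |i₂| j (abs_nonneg _) hE2 hjk
      linarith
    · by_contra hcon
      push_neg at hcon
      have hgm := hg1 m (by linarith)
      set j : ℕ := (m - i₁).toNat with j_def
      have hjk : 2*k ≤ j := by omega
      have hjm : m = i₁ + (j:ℤ) := by omega
      have habsm : |m| ≤ |i₁| + (j:ℤ) := by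
        rw [hjm]
        calc |i₁ + (j:ℤ)| ≤ |i₁| + |(j:ℤ)| := abs_add_le _ _
        _ = |i₁| + (j:ℤ) := by rw [Int.abs_natCast]
      have hpm : ((j:ℤ)+1) * N ≤ (3:ℤ)^j := by
        have h := pow_mul_le k j hjk
        have : (((j+1) * 3^k : ℕ) : ℤ) ≤ ((3^j : ℕ) : ℤ) := by exact_mod_cast h
        push_cast at this
        rw [N_def]
        linarith
      have hchain : |d m| ≤ 2*N + c1 + c2 * (|i₁| + (j:ℤ)) := by
        have : c2 * |m| ≤ c2 * (|i₁| + (j:ℤ)) := by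
          apply mul_le_mul_of_nonneg_left habsm hc2
        linarith
      have hfin := harith |i₁| j (abs_nonneg _) hE1 hjk
      linarith
  -- counting
  set lo : ℤ := -(i₂ + 2*(k:ℤ)) with lo_def
  set hi : ℤ := i₁ + 2*(k:ℤ) with hi_def
  have hcard : (Finset.Icc (-N) N).card ≤
      ((Finset.Ioo lo hi) ×ˢ (Finset.univ : Finset Bool)).card := by
    apply Finset.card_le_card_of_injOn (Function.surjInv hsurj)
    · intro n hn
      simp only [Finset.mem_coe, Finset.mem_Icc] at hn
      have hφ : φ (Function.surjInv hsurj n) = n := Function.surjInv_eq hsurj n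
      rcases hp : Function.surjInv hsurj n with ⟨m, u⟩
      rw [hp] at hφ
      have habs : |φ (m, u)| ≤ N := by
        rw [hφ]
        rw [abs_le]
        exact ⟨hn.1, hn.2⟩
      have hm := main m u habs
      simp only [Finset.mem_coe, Finset.mem_product, Finset.mem_Ioo, Finset.mem_univ, and_true]
      exact hm
    · exact (Function.injective_surjInv hsurj).injOn
  rw [Finset.card_product, Int.card_Icc, Int.card_Ioo] at hcard
  simp only [Finset.card_univ, Fintype.card_bool] at hcard
  have h1 : ((N + 1 - -N).toNat : ℤ) = 2*N + 1 := by
    rw [Int.toNat_of_nonneg (by linarith)]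
    ring
  have h2 : (((hi - lo - 1).toNat : ℤ)) ≤ E + 4*(k:ℤ) := by
    rw [Int.toNat_eq_max]
    apply max_le
    · rw [hi_def, lo_def]
      have hk0 : (0:ℤ) ≤ (k:ℤ) := by positivity
      linarith
    · have hk0 : (0:ℤ) ≤ (k:ℤ) := by positivity
      linarith
  have hfinal : ((N + 1 - -N).toNat : ℤ) ≤ ((hi - lo - 1).toNat : ℤ) * 2 := by
    exact_mod_cast hcard
  rw [h1] at hfinal
  linarith
end

section
/- Let (a_i), (b_i) be integer sequences satisfying the ladder harmonic recurrences a_{i+1} = 3a_i - b_i - a_{i-1} and b_{i+1} = 3b_i - a_i - b_{i-1} for all i. If a_1 = max{a_0, a_1, b_0, b_1} and the values a_0, a_1, b_0, b_1 are pairwise distinct, then max{a_2, b_2} ≥ a_1 + 3. -/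
/-- Let `(a_i)`, `(b_i)` be integer sequences satisfying the ladder harmonic
recurrences `a_{i+1} = 3a_i - b_i - a_{i-1}` and `b_{i+1} = 3b_i - a_i - b_{i-1}`.
If `a 1 = max {a 0, a 1, b 0, b 1}` and the four values `a 0, a 1, b 0, b 1`
are pairwise distinct, then `max (a 2) (b 2) ≥ a 1 + 3`. -/
theorem ladder_recurrence_max_grows (a b : ℤ → ℤ)
    (hrec : ∀ i : ℤ, a (i + 1) = 3 * a i - b i - a (i - 1) ∧
                     b (i + 1) = 3 * b i - a i - b (i - 1))
    (hmax : a 1 = max (max (a 0) (a 1)) (max (b 0) (b 1)))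
    (h01 : a 0 ≠ a 1) (h02 : a 0 ≠ b 0) (h03 : a 0 ≠ b 1)
    (h12 : a 1 ≠ b 0) (h13 : a 1 ≠ b 1) (h23 : b 0 ≠ b 1) :
    a 1 + 3 ≤ max (a 2) (b 2) := by
  have h := (hrec 1).1
  norm_num at h
  have h0 : a 0 ≤ a 1 := hmax ▸ le_max_of_le_left (le_max_left _ _)
  have h1 : b 1 ≤ a 1 := hmax ▸ le_max_of_le_right (le_max_right _ _)
  have : a 1 + 3 ≤ a 2 := by omega
  exact le_trans this (le_max_left _ _)
end
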